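/- arXiv:1411.3540 — 4 statements merged into one kernel-verified Lean document; each statement's English description precedes it below -/
import Mathlib

section
/- Lemma (ergodic lemma for triangular sums). Let (Ω, ℱ, ℙ) be a probability space and τ : Ω → Ω an ergodic measure-preserving transformation. Let r > 1 and let (f_k)_{k≥1} be a sequence of functions in L^r(Ω, ℙ) with Σ_{k≥1} ‖f_k‖_{L^r} < ∞. Then for ℙ-almost every ω, (1/n) Σ_{k=1}^{n−1} Σ_{ℓ=0}^{n−k−1} f_k(τ^ℓ ω) → Σ_{k=1}^∞ ∫_Ω f_k dℙ as n → ∞. -/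
open MeasureTheory Filter Finset Topology

section ErgodicAux

lemma ereal_limsup_le_of_freq (x y : ℕ → ℝ)
    (H : ∀ β γ : ℝ, γ < β → (∃ᶠ n in atTop, β < x n) → ∃ᶠ n in atTop, γ < y n) :
    limsup (fun n => ((x n : EReal))) atTop ≤ limsup (fun n => ((y n : EReal))) atTop := by
  refine le_of_forall_lt fun c hc => ?_
  obtain ⟨β, hcβ, hβ⟩ := EReal.exists_between_coe_real hc
  obtain ⟨γ, hcγ, hγβ⟩ := EReal.exists_between_coe_real hcβ
  have hfreq : ∃ᶠ n in atTop, (β : EReal) < (x n : EReal) :=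
    Filter.frequently_lt_of_lt_limsup (by isBoundedDefault) hβ
  have hfreq' : ∃ᶠ n in atTop, β < x n := hfreq.mono fun n h => EReal.coe_lt_coe_iff.mp h
  have h2 := H β γ (EReal.coe_lt_coe_iff.mp hγβ) hfreq'
  have : (γ : EReal) ≤ limsup (fun n => ((y n : EReal))) atTop :=
    Filter.le_limsup_of_frequently_le (h2.mono fun n h => le_of_lt (EReal.coe_lt_coe_iff.mpr h))
      (by isBoundedDefault)
  exact lt_of_lt_of_le hcγ this

/-- Shift-perturbation invariance of the EReal limsup of Birkhoff averages. -/
lemma limsup_shift_perturb (u : ℕ → ℝ) (c : ℝ) :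
    limsup (fun n => (((u (n + 1) - c) / n : ℝ) : EReal)) atTop
      = limsup (fun n => ((u n / n : ℝ) : EReal)) atTop := by
  apply le_antisymm
  · apply ereal_limsup_le_of_freq
    intro β γ hγβ hfr
    rw [Filter.frequently_atTop] at hfr ⊢
    intro N
    obtain ⟨n, hn, hxn⟩ := hfr (max (max N 1) (⌈|c - β| / (β - γ)⌉₊ + 1))
    have hn1 : 1 ≤ n := le_trans (le_max_right N 1) (le_trans (le_max_left _ _) hn)
    have hnN : N ≤ n + 1 := le_trans (le_trans (le_max_left N 1) (le_trans (le_max_left _ _) hn)) (Nat.le_succ n)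
    refine ⟨n + 1, hnN, ?_⟩
    have hnpos : (0:ℝ) < n := by exact_mod_cast hn1
    have hu : β * (n:ℝ) < u (n + 1) - c := (lt_div_iff₀ hnpos).mp hxn
    have hceil : (⌈|c - β| / (β - γ)⌉₊ : ℝ) ≥ |c - β| / (β - γ) := Nat.le_ceil _
    have hnge : (n:ℝ) ≥ |c - β| / (β - γ) + 1 := by
      have : (n:ℕ) ≥ ⌈|c - β| / (β - γ)⌉₊ + 1 := le_trans (le_max_right _ _) hn
      have h2 : (n:ℝ) ≥ (⌈|c - β| / (β - γ)⌉₊ + 1 : ℕ) := by exact_mod_cast this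
      push_cast at h2; linarith
    have hβγ : (0:ℝ) < β - γ := by linarith
    have hkey : (n:ℝ) * (β - γ) ≥ |c - β| + (β - γ) := by
      have := mul_le_mul_of_nonneg_right hnge (le_of_lt hβγ)
      calc (n:ℝ) * (β - γ) ≥ (|c - β| / (β - γ) + 1) * (β - γ) := by nlinarith
        _ = |c - β| + (β - γ) := by field_simp
    have habs : -|c - β| ≤ c - β := neg_abs_le _
    have : γ * ((n:ℝ) + 1) < u (n + 1) := by nlinarith
    have hpos : (0:ℝ) < (n:ℝ) + 1 := by positivity
    rw [show ((n+1:ℕ):ℝ) = (n:ℝ) + 1 by push_cast; ring]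
    exact (lt_div_iff₀ hpos).mpr (by linarith)
  · apply ereal_limsup_le_of_freq
    intro β γ hγβ hfr
    rw [Filter.frequently_atTop] at hfr ⊢
    intro N
    obtain ⟨m, hm, hym⟩ := hfr (max (N + 1) (⌈|c - γ| / (β - γ)⌉₊ + 2))
    have hm2 : 2 ≤ m := le_trans (le_trans (by omega : 2 ≤ ⌈|c - γ| / (β - γ)⌉₊ + 2) (le_max_right _ _)) hm
    have hmN : N + 1 ≤ m := le_trans (le_max_left _ _) hm
    refine ⟨m - 1, by omega, ?_⟩
    have hmpos : (0:ℝ) < m := by positivity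
    have hum : u m > (m:ℝ) * β := by
      have := (lt_div_iff₀ hmpos).mp hym; linarith
    set n := m - 1 with hn
    have hneq : n + 1 = m := by omega
    have hncast : ((n:ℕ):ℝ) = (m:ℝ) - 1 := by
      rw [hn]; push_cast [Nat.cast_sub (by omega : 1 ≤ m)]; ring
    have hm2' : (2:ℝ) ≤ (m:ℝ) := by exact_mod_cast hm2
    have hnpos : (0:ℝ) < (n:ℝ) := by rw [hncast]; linarith
    have hceil : (⌈|c - γ| / (β - γ)⌉₊ : ℝ) ≥ |c - γ| / (β - γ) := Nat.le_ceil _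
    have hβγ : (0:ℝ) < β - γ := by linarith
    have hmge : (m:ℝ) ≥ |c - γ| / (β - γ) + 2 := by
      have : (m:ℕ) ≥ ⌈|c - γ| / (β - γ)⌉₊ + 2 := le_trans (le_max_right _ _) hm
      have h2 : (m:ℝ) ≥ (⌈|c - γ| / (β - γ)⌉₊ + 2 : ℕ) := by exact_mod_cast this
      push_cast at h2; linarith
    have hkey : (m:ℝ) * (β - γ) ≥ |c - γ| + 2 * (β - γ) := by
      calc (m:ℝ) * (β - γ) ≥ (|c - γ| / (β - γ) + 2) * (β - γ) := by nlinarith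
        _ = |c - γ| + 2 * (β - γ) := by field_simp
    have habs : c - γ ≤ |c - γ| := le_abs_self _
    have hstep : γ * (n:ℝ) < u m - c := by rw [hncast]; nlinarith [hkey, hum, habs, hβγ]
    have : γ < (u (n + 1) - c) / (n:ℝ) := by
      rw [hneq]; exact (lt_div_iff₀ hnpos).mpr (by linarith)
    exact this


variable {Ω : Type*} [MeasurableSpace Ω] {P : Measure Ω} [IsProbabilityMeasure P]
  {τ : Ω → Ω} {f : Ω → ℝ}

/-- Running maximum `max_{0 ≤ n ≤ N} S_n f`. -/
noncomputable def maxSum (τ : Ω → Ω) (f : Ω → ℝ) : ℕ → Ω → ℝ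
  | 0 => fun _ => 0
  | N + 1 => fun ω => max (maxSum τ f N ω) (birkhoffSum τ f (N + 1) ω)

lemma maxSum_nonneg (N : ℕ) (ω : Ω) : 0 ≤ maxSum τ f N ω := by
  induction N with
  | zero => simp [maxSum]
  | succ N ih => exact le_trans ih (le_max_left _ _)

lemma maxSum_mono (ω : Ω) : Monotone fun N => maxSum τ f N ω :=
  monotone_nat_of_le_succ fun N => le_max_left _ _

lemma measurable_birkhoffSum (hτ : Measurable τ) (hf : Measurable f) (n : ℕ) :
    Measurable (birkhoffSum τ f n) := by
  apply Finset.measurable_sum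
  intro k _
  exact hf.comp (hτ.iterate k)

lemma measurable_maxSum (hτ : Measurable τ) (hf : Measurable f) (N : ℕ) :
    Measurable (maxSum τ f N) := by
  induction N with
  | zero => exact measurable_const
  | succ N ih => exact ih.max (measurable_birkhoffSum hτ hf (N + 1))

lemma maxSum_le (N : ℕ) (ω : Ω) :
    maxSum τ f N ω ≤ ∑ l ∈ range N, |f (τ^[l] ω)| := by
  induction N with
  | zero => simp [maxSum]
  | succ N ih =>
      refine max_le (ih.trans ?_) ?_
      · exact Finset.sum_le_sum_of_subset_of_nonneg
          (Finset.range_subset_range.mpr (Nat.le_succ N)) (fun _ _ _ => abs_nonneg _)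
      · exact le_trans (Finset.sum_le_sum fun l _ => le_abs_self _) le_rfl

lemma integrable_comp_iterate (hτ : MeasurePreserving τ P P) (hfi : Integrable f P) (l : ℕ) :
    Integrable (fun ω => f (τ^[l] ω)) P :=
  ((hτ.iterate l).integrable_comp hfi.aestronglyMeasurable).mpr hfi

lemma integrable_maxSum (hτ : MeasurePreserving τ P P) (hf : Measurable f)
    (hfi : Integrable f P) (N : ℕ) : Integrable (maxSum τ f N) P := by
  have hint : Integrable (fun ω => ∑ l ∈ range N, |f (τ^[l] ω)|) P :=
    integrable_finset_sum _ fun l _ => (integrable_comp_iterate hτ hfi l).abs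
  refine Integrable.mono' hint ((measurable_maxSum hτ.measurable hf N).aestronglyMeasurable) ?_
  filter_upwards with ω
  rw [Real.norm_eq_abs, abs_of_nonneg (maxSum_nonneg N ω)]
  exact maxSum_le N ω

lemma maxSum_succ_eq (N : ℕ) (ω : Ω) :
    maxSum τ f (N + 1) ω = max 0 (f ω + maxSum τ f N (τ ω)) := by
  induction N with
  | zero => simp [maxSum, birkhoffSum_one]
  | succ N ih =>
      show max (maxSum τ f (N + 1) ω) (birkhoffSum τ f (N + 2) ω) = _
      rw [ih, birkhoffSum_succ' τ f (N + 1) ω]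
      show _ = max 0 (f ω + max (maxSum τ f N (τ ω)) (birkhoffSum τ f (N + 1) (τ ω)))
      rw [max_assoc, ← max_add_add_left]

/-- The set where some Birkhoff sum is positive, up to time `N`. -/
lemma maxSum_pos_iff (N : ℕ) (ω : Ω) :
    0 < maxSum τ f N ω ↔ ∃ n < N, 0 < birkhoffSum τ f (n + 1) ω := by
  induction N with
  | zero => simp [maxSum]
  | succ N ih =>
      show 0 < max (maxSum τ f N ω) (birkhoffSum τ f (N + 1) ω) ↔ _
      rw [lt_max_iff, ih]
      constructor
      · rintro (⟨n, hn, h⟩ | h)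
        · exact ⟨n, Nat.lt_succ_of_lt hn, h⟩
        · exact ⟨N, Nat.lt_succ_self N, h⟩
      · rintro ⟨n, hn, h⟩
        rcases Nat.lt_succ_iff_lt_or_eq.mp hn with h' | rfl
        · exact Or.inl ⟨n, h', h⟩
        · exact Or.inr h

/-- **Maximal ergodic theorem.** -/
theorem maximal_ergodic (hτ : MeasurePreserving τ P P) (hf : Measurable f)
    (hfi : Integrable f P) :
    0 ≤ ∫ ω in {ω | ∃ n, 0 < birkhoffSum τ f (n + 1) ω}, f ω ∂P := by
  set A : ℕ → Set Ω := fun N => {ω | 0 < maxSum τ f N ω} with hA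
  have hAmeas : ∀ N, MeasurableSet (A N) :=
    fun N => measurableSet_lt measurable_const (measurable_maxSum hτ.measurable hf N)
  have hAmono : Monotone A := fun N M h ω hω => lt_of_lt_of_le hω (maxSum_mono ω h)
  have hAU : (⋃ N, A N) = {ω | ∃ n, 0 < birkhoffSum τ f (n + 1) ω} := by
    ext ω
    simp only [Set.mem_iUnion, hA, Set.mem_setOf_eq, maxSum_pos_iff]
    constructor
    · rintro ⟨N, n, _, h⟩; exact ⟨n, h⟩
    · rintro ⟨n, h⟩; exact ⟨n + 1, n, Nat.lt_succ_self n, h⟩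
  -- each ∫_{A N} f ≥ 0
  have key : ∀ N, 0 ≤ ∫ ω in A (N + 1), f ω ∂P := by
    intro N
    have hMint : ∀ M, Integrable (maxSum τ f M) P := integrable_maxSum hτ hf hfi
    have hMτint : Integrable (fun ω => maxSum τ f N (τ ω)) P :=
      (hτ.integrable_comp (hMint N).aestronglyMeasurable).mpr (hMint N)
    -- on A (N+1) : maxSum (N+1) ≤ f + maxSum N ∘ τ
    have hineq : ∀ ω ∈ A (N + 1), maxSum τ f (N + 1) ω - maxSum τ f N (τ ω) ≤ f ω := by
      intro ω hω
      have h1 : 0 < maxSum τ f (N + 1) ω := hω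
      rw [maxSum_succ_eq] at h1 ⊢
      have : max 0 (f ω + maxSum τ f N (τ ω)) = f ω + maxSum τ f N (τ ω) := by
        rcases max_cases 0 (f ω + maxSum τ f N (τ ω)) with ⟨h, _⟩ | ⟨h, _⟩
        · rw [h] at h1; exact absurd h1 (lt_irrefl 0)
        · exact h
      rw [this]; linarith
    have step1 : ∫ ω in A (N + 1), (maxSum τ f (N + 1) ω - maxSum τ f N (τ ω)) ∂P
        ≤ ∫ ω in A (N + 1), f ω ∂P := by
      apply setIntegral_mono_on ((hMint (N + 1)).sub hMτint).integrableOn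
        hfi.integrableOn (hAmeas (N + 1)) hineq
    have step2 : ∫ ω in A (N + 1), maxSum τ f (N + 1) ω ∂P = ∫ ω, maxSum τ f (N + 1) ω ∂P := by
      rw [← integral_add_compl (hAmeas (N + 1)) (hMint (N + 1))]
      have : ∫ ω in (A (N + 1))ᶜ, maxSum τ f (N + 1) ω ∂P = 0 := by
        apply setIntegral_eq_zero_of_forall_eq_zero
        intro ω hω
        have := maxSum_nonneg (τ := τ) (f := f) (N + 1) ω
        have h2 : ¬ (0 < maxSum τ f (N + 1) ω) := hω
        linarith
      rw [this, add_zero]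
    have step3 : ∫ ω in A (N + 1), maxSum τ f N (τ ω) ∂P ≤ ∫ ω, maxSum τ f N (τ ω) ∂P := by
      apply setIntegral_le_integral hMτint
      filter_upwards with ω using maxSum_nonneg N (τ ω)
    have step4 : ∫ ω, maxSum τ f N (τ ω) ∂P = ∫ ω, maxSum τ f N ω ∂P := by
      conv_rhs => rw [← hτ.map_eq]
      rw [integral_map hτ.measurable.aemeasurable]
      rw [hτ.map_eq]
      exact (hMint N).aestronglyMeasurable
    have step5 : ∫ ω, maxSum τ f N ω ∂P ≤ ∫ ω, maxSum τ f (N + 1) ω ∂P := by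
      apply integral_mono (hMint N) (hMint (N + 1))
      intro ω; exact maxSum_mono ω (Nat.le_succ N)
    calc (0:ℝ) ≤ ∫ ω in A (N+1), maxSum τ f (N + 1) ω ∂P - ∫ ω in A (N+1), maxSum τ f N (τ ω) ∂P := by
            rw [step2]; linarith [step3, step4, step5]
      _ = ∫ ω in A (N + 1), (maxSum τ f (N + 1) ω - maxSum τ f N (τ ω)) ∂P := by
            rw [integral_sub ((hMint (N + 1)).integrableOn) (hMτint.integrableOn)]
      _ ≤ _ := step1
  -- pass to the limit
  rw [← hAU]
  have := tendsto_setIntegral_of_monotone hAmeas hAmono (hfi.integrableOn)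
  refine ge_of_tendsto this ?_
  filter_upwards [eventually_ge_atTop 1] with N hN
  obtain ⟨M, rfl⟩ := Nat.exists_eq_add_of_le hN
  simpa [add_comm] using key M


section
variable {Ω : Type*} [MeasurableSpace Ω] {P : Measure Ω} [IsProbabilityMeasure P]
  {τ : Ω → Ω} {f : Ω → ℝ}

-- placeholders for already-proven lemmas
noncomputable def erealAvg (τ : Ω → Ω) (f : Ω → ℝ) (ω : Ω) : EReal :=
  limsup (fun n => ((birkhoffSum τ f n ω / n : ℝ) : EReal)) atTop

lemma erealAvg_comp (ω : Ω) : erealAvg τ f (τ ω) = erealAvg τ f ω := by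
  unfold erealAvg
  rw [← limsup_shift_perturb (fun n => birkhoffSum τ f n ω) (f ω)]
  congr 1
  funext n
  have : birkhoffSum τ f n (τ ω) = birkhoffSum τ f (n + 1) ω - f ω := by
    rw [birkhoffSum_succ' τ f n ω]; ring
  rw [this]

lemma measurable_erealAvg (hτ : Measurable τ) (hf : Measurable f) :
    Measurable (erealAvg τ f) := by
  apply Measurable.limsup
  intro n
  exact ((measurable_birkhoffSum hτ hf n).div_const _).coe_real_ereal

lemma birkhoffSum_sub_const (n : ℕ) (ω : Ω) (α : ℝ) :
    birkhoffSum τ (fun x => f x - α) n ω = birkhoffSum τ f n ω - n * α := by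
  simp [birkhoffSum, Finset.sum_sub_distrib, mul_comm]

lemma birkhoff_limsup_le (hτ : MeasurePreserving τ P P) (herg : Ergodic τ P)
    (hf : Measurable f) (hfi : Integrable f P) :
    ∀ᵐ ω ∂P, erealAvg τ f ω ≤ ((∫ x, f x ∂P : ℝ) : EReal) := by
  obtain ⟨C, hC⟩ := herg.ae_eq_const_of_ae_eq_comp₀
    (measurable_erealAvg hτ.measurable hf).nullMeasurable
    (Filter.Eventually.of_forall fun ω => erealAvg_comp ω)
  have hCle : C ≤ ((∫ x, f x ∂P : ℝ) : EReal) := by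
    by_contra hlt
    push_neg at hlt
    obtain ⟨α, h1, h2⟩ := EReal.exists_between_coe_real hlt
    set g : Ω → ℝ := fun x => f x - α with hg
    have hgm : Measurable g := hf.sub measurable_const
    have hgi : Integrable g P := hfi.sub (integrable_const α)
    have hAfull : ∀ᵐ ω ∂P, ω ∈ {ω | ∃ n, 0 < birkhoffSum τ g (n + 1) ω} := by
      filter_upwards [hC] with ω hω
      have hlt2 : (α : EReal) <
          limsup (fun n => ((birkhoffSum τ f n ω / n : ℝ) : EReal)) atTop := by
        show (α : EReal) < erealAvg τ f ω
        rw [show erealAvg τ f ω = C from hω]; exact h2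
      have hfreq := Filter.frequently_lt_of_lt_limsup (by isBoundedDefault) hlt2
      obtain ⟨n, hn1, hn⟩ := Filter.frequently_atTop.mp hfreq 1
      have hn' : α < birkhoffSum τ f n ω / n := EReal.coe_lt_coe_iff.mp hn
      have hnpos : (0:ℝ) < n := by exact_mod_cast hn1
      refine ⟨n - 1, ?_⟩
      have hneq : n - 1 + 1 = n := Nat.succ_pred_eq_of_pos hn1
      rw [hneq, birkhoffSum_sub_const]
      have := (lt_div_iff₀ hnpos).mp hn'
      linarith
    have hrestrict : P.restrict {ω | ∃ n, 0 < birkhoffSum τ g (n + 1) ω} = P :=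
      Measure.restrict_eq_self_of_ae_mem hAfull
    have hge := maximal_ergodic hτ hgm hgi
    rw [hrestrict] at hge
    rw [hg] at hge
    rw [integral_sub hfi (integrable_const α), integral_const] at hge
    simp [measure_univ] at hge
    have : (∫ x, f x ∂P) < α := EReal.coe_lt_coe_iff.mp h1
    linarith
  filter_upwards [hC] with ω hω
  rw [show erealAvg τ f ω = C from hω]
  exact hCle

lemma birkhoff_liminf_ge (hτ : MeasurePreserving τ P P) (herg : Ergodic τ P)
    (hf : Measurable f) (hfi : Integrable f P) :
    ∀ᵐ ω ∂P, ((∫ x, f x ∂P : ℝ) : EReal)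
      ≤ liminf (fun n => ((birkhoffSum τ f n ω / n : ℝ) : EReal)) atTop := by
  have hneg := birkhoff_limsup_le (f := fun x => -f x) hτ herg hf.neg hfi.neg
  filter_upwards [hneg] with ω hω
  have hbs : ∀ n, birkhoffSum τ (fun x => -f x) n ω = -birkhoffSum τ f n ω := by
    intro n; simp [birkhoffSum]
  have heq : erealAvg τ (fun x => -f x) ω
      = - liminf (fun n => ((birkhoffSum τ f n ω / n : ℝ) : EReal)) atTop := by
    unfold erealAvg
    rw [← EReal.limsup_neg]
    congr 1
    funext n
    rw [hbs n, neg_div, EReal.coe_neg]; rfl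
  rw [heq] at hω
  have hint : (∫ x, (fun x => -f x) x ∂P) = -(∫ x, f x ∂P) := by
    simp [integral_neg]
  rw [hint, EReal.coe_neg] at hω
  exact EReal.neg_le_neg_iff.mp hω

theorem birkhoff_ergodic_ae (hτ : MeasurePreserving τ P P) (herg : Ergodic τ P)
    (hf : Measurable f) (hfi : Integrable f P) :
    ∀ᵐ ω ∂P, Tendsto (fun n => birkhoffSum τ f n ω / n) atTop (𝓝 (∫ x, f x ∂P)) := by
  filter_upwards [birkhoff_limsup_le hτ herg hf hfi, birkhoff_liminf_ge hτ herg hf hfi]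
    with ω h1 h2
  set v : ℕ → EReal := fun n => ((birkhoffSum τ f n ω / n : ℝ) : EReal) with hv
  have hle : liminf v atTop ≤ limsup v atTop := liminf_le_limsup
  have heq1 : limsup v atTop = ((∫ x, f x ∂P : ℝ) : EReal) := le_antisymm h1 (le_trans h2 hle)
  have heq2 : liminf v atTop = ((∫ x, f x ∂P : ℝ) : EReal) := le_antisymm (heq1 ▸ hle) h2
  have ht := tendsto_of_liminf_eq_limsup heq2 heq1
  exact EReal.tendsto_coe.mp ht
end


section
variable {Ω : Type*} [MeasurableSpace Ω] {P : Measure Ω} [IsProbabilityMeasure P]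
  {τ : Ω → Ω}

theorem triangular_main (hτ : MeasurePreserving τ P P) (herg : Ergodic τ P)
    (F : ℕ → Ω → ℝ) (hFm : ∀ k, Measurable (F k)) (hFi : ∀ k, Integrable (F k) P)
    (hFsum : Summable fun k => ∫ ω, |F k ω| ∂P) :
    ∀ᵐ ω ∂P, Tendsto (fun n : ℕ =>
        (1 / (n : ℝ)) * ∑ m ∈ Finset.range (n - 1), birkhoffSum τ (F m) (n - 1 - m) ω)
      atTop (𝓝 (∑' k, ∫ ω, F k ω ∂P)) := by
  classical
  have habs_nonneg : ∀ k, 0 ≤ ∫ ω, |F k ω| ∂P := fun k => integral_nonneg fun ω => abs_nonneg _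
  have hsumF : Summable (fun k => ∫ ω, F k ω ∂P) := by
    apply Summable.of_norm_bounded hFsum
    intro k
    calc ‖∫ ω, F k ω ∂P‖ ≤ ∫ ω, ‖F k ω‖ ∂P := norm_integral_le_integral_norm _
      _ = ∫ ω, |F k ω| ∂P := by simp [Real.norm_eq_abs]
  -- tail ennreal functions
  set G : ℕ → Ω → ENNReal := fun K ω => ∑' j, (‖F (K + j) ω‖₊ : ENNReal) with hGdef
  have hGmeas : ∀ K, Measurable (G K) := fun K =>
    Measurable.ennreal_tsum fun j => (hFm (K + j)).nnnorm.coe_nnreal_ennreal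
  have hintabs : ∀ k, |∫ x, F k x ∂P| ≤ ∫ x, |F k x| ∂P := fun k => by
    simpa [Real.norm_eq_abs] using norm_integral_le_integral_norm (μ := P) (F k)
  have htailsum : ∀ K, Summable fun j => ∫ ω, |F (K + j) ω| ∂P := fun K =>
    ((summable_nat_add_iff K).mpr hFsum).congr fun j => by rw [add_comm]
  have hlint : ∀ k, ∫⁻ ω, (‖F k ω‖₊ : ENNReal) ∂P = ENNReal.ofReal (∫ ω, |F k ω| ∂P) := by
    intro k
    rw [show ∫⁻ ω, (‖F k ω‖₊ : ENNReal) ∂P = ∫⁻ ω, ‖F k ω‖ₑ ∂P from rfl,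
      ← ofReal_integral_norm_eq_lintegral_enorm (hFi k)]
    simp [Real.norm_eq_abs]
  have hGlint : ∀ K, ∫⁻ ω, G K ω ∂P = ENNReal.ofReal (∑' j, ∫ ω, |F (K + j) ω| ∂P) := by
    intro K
    rw [hGdef]
    rw [lintegral_tsum fun j => ((hFm (K + j)).nnnorm.coe_nnreal_ennreal).aemeasurable]
    rw [ENNReal.ofReal_tsum_of_nonneg (fun j => habs_nonneg (K + j)) (htailsum K)]
    exact tsum_congr fun j => hlint (K + j)
  have hGfin : ∀ K, ∫⁻ ω, G K ω ∂P ≠ ⊤ := by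
    intro K; rw [hGlint K]; exact ENNReal.ofReal_ne_top
  have hGae : ∀ K, ∀ᵐ ω ∂P, G K ω < ⊤ := fun K => ae_lt_top (hGmeas K) (hGfin K)
  set g : ℕ → Ω → ℝ := fun K ω => (G K ω).toReal with hgdef
  have hgm : ∀ K, Measurable (g K) := fun K => (hGmeas K).ennreal_toReal
  have hgi : ∀ K, Integrable (g K) P := fun K =>
    integrable_toReal_of_lintegral_ne_top (hGmeas K).aemeasurable (hGfin K)
  have hgint : ∀ K, ∫ ω, g K ω ∂P = ∑' j, ∫ ω, |F (K + j) ω| ∂P := by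
    intro K
    rw [hgdef]
    rw [integral_toReal (hGmeas K).aemeasurable (hGae K), hGlint K,
      ENNReal.toReal_ofReal (tsum_nonneg fun j => habs_nonneg (K + j))]
  -- key pointwise bound on the set where G K x < ⊤
  have hptwise : ∀ K x, G K x < ⊤ → ∀ M : ℕ, ∑ j ∈ range M, |F (K + j) x| ≤ g K x := by
    intro K x hx M
    have h1 : (∑ j ∈ range M, (‖F (K + j) x‖₊ : ENNReal)) ≤ G K x := ENNReal.sum_le_tsum _
    have h2 := ENNReal.toReal_mono hx.ne h1
    rw [ENNReal.toReal_sum (fun j _ => ENNReal.coe_ne_top)] at h2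
    simpa [Real.norm_eq_abs] using h2
  -- a.e. sets
  have hB1 : ∀ᵐ ω ∂P, ∀ k, Tendsto (fun n => birkhoffSum τ (F k) n ω / n) atTop
      (𝓝 (∫ x, F k x ∂P)) :=
    ae_all_iff.mpr fun k => birkhoff_ergodic_ae hτ herg (hFm k) (hFi k)
  have hB2 : ∀ᵐ ω ∂P, ∀ K, Tendsto (fun n => birkhoffSum τ (g K) n ω / n) atTop
      (𝓝 (∫ x, g K x ∂P)) :=
    ae_all_iff.mpr fun K => birkhoff_ergodic_ae hτ herg (hgm K) (hgi K)
  have hB3 : ∀ᵐ ω ∂P, ∀ K l, G K (τ^[l] ω) < ⊤ := by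
    rw [ae_all_iff]
    intro K
    rw [ae_all_iff]
    intro l
    have hSeq : {x | ¬ G K x < ⊤} = G K ⁻¹' {⊤} := by
      ext x; simp [lt_top_iff_ne_top]
    have hS : MeasurableSet (G K ⁻¹' {(⊤ : ENNReal)}) := (hGmeas K) (measurableSet_singleton ⊤)
    have hnull : P (G K ⁻¹' {(⊤ : ENNReal)}) = 0 := by
      rw [← hSeq]; exact ae_iff.mp (hGae K)
    have hpre : P (τ^[l] ⁻¹' (G K ⁻¹' {(⊤ : ENNReal)})) = 0 := by
      rw [(hτ.iterate l).measure_preimage hS.nullMeasurableSet]; exact hnull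
    rw [ae_iff]
    convert hpre using 2
    ext x; simp [lt_top_iff_ne_top]
  filter_upwards [hB1, hB2, hB3] with ω h1 h2 h3
  set L := ∑' k, ∫ x, F k x ∂P with hL
  refine Metric.tendsto_atTop.mpr fun ε hε => ?_
  -- choose the tail cutoff K
  obtain ⟨K, hK⟩ : ∃ K, ∑' j, ∫ x, |F (K + j) x| ∂P < ε / 4 := by
    have htail0 : Tendsto (fun K : ℕ => ∑' j, ∫ x, |F (j + K) x| ∂P) atTop (𝓝 0) :=
      _root_.tendsto_sum_nat_add (f := fun k => ∫ x, |F k x| ∂P)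
    have := (htail0.eventually_lt_const (by positivity : (0:ℝ) < ε / 4)).exists
    obtain ⟨K, hK⟩ := this
    refine ⟨K, ?_⟩
    calc ∑' j, ∫ x, |F (K + j) x| ∂P = ∑' j, ∫ x, |F (j + K) x| ∂P :=
          tsum_congr fun j => by rw [add_comm]
      _ < ε / 4 := hK
  set TK := ∑' j, ∫ x, |F (K + j) x| ∂P with hTK
  have hTKnn : 0 ≤ TK := tsum_nonneg fun j => habs_nonneg (K + j)
  -- the head of the limit
  have habssum : Summable fun j => |∫ x, F (K + j) x ∂P| :=
    Summable.of_nonneg_of_le (fun j => abs_nonneg _) (fun j => hintabs (K + j)) (htailsum K)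
  have h4 : |∑' j, ∫ x, F (K + j) x ∂P| ≤ TK := by
    have h5 : |∑' j, ∫ x, F (K + j) x ∂P| ≤ ∑' j, |∫ x, F (K + j) x ∂P| := by
      have := norm_tsum_le_tsum_norm (f := fun j => ∫ x, F (K + j) x ∂P)
        (by simpa [Real.norm_eq_abs] using habssum)
      simpa [Real.norm_eq_abs] using this
    exact h5.trans (Summable.tsum_le_tsum (fun j => hintabs (K + j)) habssum (htailsum K))
  have hLtail : |L - ∑ m ∈ range K, ∫ x, F m x ∂P| ≤ TK := by
    have hsplit := Summable.sum_add_tsum_nat_add (f := fun k => ∫ x, F k x ∂P) K hsumF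
    have h6 : ∑' (j : ℕ), ∫ x, F (j + K) x ∂P = ∑' (j : ℕ), ∫ x, F (K + j) x ∂P :=
      tsum_congr fun j => by rw [add_comm]
    rw [h6] at hsplit
    calc |L - ∑ m ∈ range K, ∫ x, F m x ∂P| = |∑' j, ∫ x, F (K + j) x ∂P| := by
          rw [hL, ← hsplit]; congr 1; ring
      _ ≤ TK := h4
  -- convergence of the head terms
  have hmain : Tendsto (fun n : ℕ => ∑ m ∈ range K, birkhoffSum τ (F m) (n - 1 - m) ω / n)
      atTop (𝓝 (∑ m ∈ range K, ∫ x, F m x ∂P)) := by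
    apply tendsto_finset_sum
    intro m _
    have ha : Tendsto (fun n : ℕ =>
        birkhoffSum τ (F m) (n - (m + 1)) ω / ((n - (m + 1) : ℕ) : ℝ)) atTop
        (𝓝 (∫ x, F m x ∂P)) := (h1 m).comp (tendsto_sub_atTop_nat (m + 1))
    have hb : Tendsto (fun n : ℕ => ((n - (m + 1) : ℕ) : ℝ) / n) atTop (𝓝 1) := by
      have hc : Tendsto (fun n : ℕ => 1 - ((m + 1 : ℕ) : ℝ) / n) atTop (𝓝 1) := by
        simpa using tendsto_const_nhds.sub
          (tendsto_const_div_atTop_nhds_zero_nat ((m + 1 : ℕ) : ℝ))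
      apply Tendsto.congr' _ hc
      filter_upwards [eventually_ge_atTop (m + 1)] with n hn
      have hnpos : (0 : ℝ) < n := by
        have : 1 ≤ n := le_trans (by omega) hn
        exact_mod_cast Nat.lt_of_lt_of_le Nat.zero_lt_one this
      rw [Nat.cast_sub hn]
      field_simp
    have hmul := ha.mul hb
    rw [mul_one] at hmul
    apply Tendsto.congr' _ hmul
    filter_upwards [eventually_ge_atTop (m + 2)] with n hn
    have h1n : n - 1 - m = n - (m + 1) := by omega
    have hne : ((n - (m + 1) : ℕ) : ℝ) ≠ 0 := Nat.cast_ne_zero.mpr (by omega)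
    show birkhoffSum τ (F m) (n - (m + 1)) ω / ((n - (m + 1) : ℕ) : ℝ) * (((n - (m + 1) : ℕ) : ℝ) / n)
        = birkhoffSum τ (F m) (n - 1 - m) ω / n
    rw [h1n]
    field_simp
  -- eventually the tail Birkhoff average is small
  have hTK4 : ∫ x, g K x ∂P < ε / 4 := by rw [hgint K]; exact hK
  have hE2 : ∀ᶠ n in atTop, birkhoffSum τ (g K) n ω / n < ε / 4 :=
    (h2 K).eventually_lt_const hTK4
  -- the remainder bound
  have hE3 : ∀ n : ℕ, K + 2 ≤ n →
      |(1 / (n : ℝ)) * ∑ m ∈ range (n - 1), birkhoffSum τ (F m) (n - 1 - m) ω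
        - ∑ m ∈ range K, birkhoffSum τ (F m) (n - 1 - m) ω / n|
      ≤ birkhoffSum τ (g K) n ω / n := by
    intro n hn
    have hnpos : (0 : ℝ) < n := by
      have : 0 < n := by omega
      exact_mod_cast this
    have hKn : K ≤ n - 1 := by omega
    have hsplit : ∑ m ∈ range (n - 1), birkhoffSum τ (F m) (n - 1 - m) ω
        = (∑ m ∈ range K, birkhoffSum τ (F m) (n - 1 - m) ω)
          + ∑ m ∈ Finset.Ico K (n - 1), birkhoffSum τ (F m) (n - 1 - m) ω := by
      simp only [Finset.range_eq_Ico]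
      rw [Finset.sum_Ico_consecutive _ (Nat.zero_le K) hKn]
    have hbound : |∑ m ∈ Finset.Ico K (n - 1), birkhoffSum τ (F m) (n - 1 - m) ω|
        ≤ birkhoffSum τ (g K) n ω := by
      calc |∑ m ∈ Finset.Ico K (n - 1), birkhoffSum τ (F m) (n - 1 - m) ω|
          ≤ ∑ m ∈ Finset.Ico K (n - 1), |birkhoffSum τ (F m) (n - 1 - m) ω| :=
            Finset.abs_sum_le_sum_abs _ _
        _ ≤ ∑ m ∈ Finset.Ico K (n - 1), ∑ l ∈ range n, |F m (τ^[l] ω)| := by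
            apply Finset.sum_le_sum
            intro m _
            calc |birkhoffSum τ (F m) (n - 1 - m) ω|
                ≤ ∑ l ∈ range (n - 1 - m), |F m (τ^[l] ω)| := Finset.abs_sum_le_sum_abs _ _
              _ ≤ ∑ l ∈ range n, |F m (τ^[l] ω)| :=
                  Finset.sum_le_sum_of_subset_of_nonneg
                    (Finset.range_subset_range.mpr (by omega)) fun _ _ _ => abs_nonneg _
        _ = ∑ l ∈ range n, ∑ m ∈ Finset.Ico K (n - 1), |F m (τ^[l] ω)| := Finset.sum_comm
        _ ≤ ∑ l ∈ range n, g K (τ^[l] ω) := by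
            apply Finset.sum_le_sum
            intro l _
            rw [Finset.sum_Ico_eq_sum_range]
            exact hptwise K (τ^[l] ω) (h3 K l) _
        _ = birkhoffSum τ (g K) n ω := rfl
    have heq : (1 / (n : ℝ)) * ∑ m ∈ range (n - 1), birkhoffSum τ (F m) (n - 1 - m) ω
        - ∑ m ∈ range K, birkhoffSum τ (F m) (n - 1 - m) ω / n
        = (∑ m ∈ Finset.Ico K (n - 1), birkhoffSum τ (F m) (n - 1 - m) ω) / n := by
      rw [hsplit, ← Finset.sum_div]
      field_simp
      ring
    rw [heq, abs_div, abs_of_pos hnpos]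
    gcongr
  -- put everything together
  obtain ⟨N1, hN1⟩ := Metric.tendsto_atTop.mp hmain (ε / 4) (by positivity)
  obtain ⟨N2, hN2⟩ := eventually_atTop.mp hE2
  refine ⟨max (max N1 N2) (K + 2), fun n hn => ?_⟩
  have hn1 : N1 ≤ n := le_trans (le_trans (le_max_left _ _) (le_max_left _ _)) hn
  have hn2 : N2 ≤ n := le_trans (le_trans (le_max_right _ _) (le_max_left _ _)) hn
  have hnK : K + 2 ≤ n := le_trans (le_max_right _ _) hn
  have e3 := hE3 n hnK
  have e2 := hN2 n hn2
  have e1 := hN1 n hn1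
  rw [Real.dist_eq] at e1 ⊢
  set A := (1 / (n : ℝ)) * ∑ m ∈ range (n - 1), birkhoffSum τ (F m) (n - 1 - m) ω with hA
  set main := ∑ m ∈ range K, birkhoffSum τ (F m) (n - 1 - m) ω / (n : ℝ) with hmaindef
  set head := ∑ m ∈ range K, ∫ x, F m x ∂P with hhead
  have t1 : |A - main| < ε / 4 := lt_of_le_of_lt e3 e2
  have tri : |A - L| ≤ |A - main| + |main - head| + |head - L| := by
    calc |A - L| ≤ |A - head| + |head - L| := abs_sub_le _ _ _
      _ ≤ |A - main| + |main - head| + |head - L| :=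
          add_le_add_left (abs_sub_le _ _ _) _
  have t3 : |head - L| < ε / 4 := by
    rw [abs_sub_comm]
    exact lt_of_le_of_lt hLtail hK
  linarith
end

end ErgodicAux

/-- **Ergodic lemma for triangular sums.**
If `τ` is an ergodic m.p.t. of a probability space and `(f_k)_{k≥1} ⊂ L^r`, `r > 1`, with
`Σ_k ‖f_k‖_r < ∞`, then a.s.
`(1/n) Σ_{k=1}^{n-1} Σ_{ℓ=0}^{n-k-1} f_k(τ^ℓ ω) → Σ_{k≥1} ∫ f_k dP`. -/
theorem ergodic_triangular_sums
    {Ω : Type*} [MeasurableSpace Ω] (P : Measure Ω) [IsProbabilityMeasure P]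
    (τ : Ω → Ω) (hτ : MeasurePreserving τ P P) (herg : Ergodic τ P)
    (r : ℝ) (hr : 1 < r) (f : ℕ → Ω → ℝ)
    (hmem : ∀ k, 1 ≤ k → MemLp (f k) (ENNReal.ofReal r) P)
    (hsum : Summable fun k : ℕ => (eLpNorm (f (k + 1)) (ENNReal.ofReal r) P).toReal) :
    ∀ᵐ ω ∂P,
      Tendsto (fun n : ℕ =>
          (1 / (n : ℝ)) * ∑ k ∈ Finset.Ico 1 n, ∑ l ∈ Finset.range (n - k), f k (τ^[l] ω))
        atTop (nhds (∑' k : ℕ, ∫ ω, f (k + 1) ω ∂P)) := by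
  classical
  have h1r : (1 : ENNReal) ≤ ENNReal.ofReal r := by
    rw [ENNReal.one_le_ofReal]; exact hr.le
  -- measurable representatives
  set F : ℕ → Ω → ℝ := fun k => ((hmem (k + 1) (Nat.le_add_left 1 k)).1.mk (f (k + 1))) with hFdef
  have haeq : ∀ k, f (k + 1) =ᵐ[P] F k := fun k => (hmem (k + 1) (Nat.le_add_left 1 k)).1.ae_eq_mk
  have hFm : ∀ k, Measurable (F k) := fun k =>
    (hmem (k + 1) (Nat.le_add_left 1 k)).1.stronglyMeasurable_mk.measurable
  have hmemF : ∀ k, MemLp (F k) (ENNReal.ofReal r) P := fun k =>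
    (hmem (k + 1) (Nat.le_add_left 1 k)).ae_eq (haeq k)
  have hFi : ∀ k, Integrable (F k) P := fun k => (hmemF k).integrable h1r
  have heLp : ∀ k, eLpNorm (F k) (ENNReal.ofReal r) P
      = eLpNorm (f (k + 1)) (ENNReal.ofReal r) P := fun k =>
    eLpNorm_congr_ae (haeq k).symm
  have hFsum : Summable fun k => ∫ ω, |F k ω| ∂P := by
    apply Summable.of_nonneg_of_le (fun k => integral_nonneg fun ω => abs_nonneg _) _ hsum
    intro k
    have habs : ∫ ω, |F k ω| ∂P = (eLpNorm (F k) 1 P).toReal := by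
      rw [eLpNorm_one_eq_lintegral_enorm,
        ← ofReal_integral_norm_eq_lintegral_enorm (hFi k),
        ENNReal.toReal_ofReal (integral_nonneg fun ω => norm_nonneg _)]
      simp [Real.norm_eq_abs]
    rw [habs, ← heLp k]
    apply ENNReal.toReal_mono (hmemF k).eLpNorm_ne_top
    exact eLpNorm_le_eLpNorm_of_exponent_le h1r (hFm k).aestronglyMeasurable
  have hmain := triangular_main hτ herg F hFm hFi hFsum
  -- almost-everywhere identification of the two expressions
  have haeiter : ∀ᵐ ω ∂P, ∀ k l : ℕ, f (k + 1) (τ^[l] ω) = F k (τ^[l] ω) := by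
    rw [ae_all_iff]
    intro k
    rw [ae_all_iff]
    intro l
    exact (hτ.iterate l).quasiMeasurePreserving.ae_eq_comp (haeq k)
  have hLeq : (∑' k : ℕ, ∫ ω, f (k + 1) ω ∂P) = ∑' k : ℕ, ∫ ω, F k ω ∂P :=
    tsum_congr fun k => integral_congr_ae (haeq k)
  filter_upwards [hmain, haeiter] with ω hm he
  rw [hLeq]
  apply Tendsto.congr _ hm
  intro n
  congr 1
  rw [Finset.sum_Ico_eq_sum_range]
  apply Finset.sum_congr rfl
  intro m _
  have hidx : n - (1 + m) = n - 1 - m := by omega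
  rw [hidx]
  apply Finset.sum_congr rfl
  intro l _
  rw [show 1 + m = m + 1 by ring]
  exact (he m l).symm
end

section
/- Lemma (rigidity in the commutant of a matrix with irreducible characteristic polynomial). Let ρ ≥ 1 and let M be a ρ×ρ integer matrix with det M ≠ 0 whose characteristic polynomial is irreducible over ℚ. Let B be a ρ×ρ integer matrix with det B ≠ 0 and BM = MB. If there exists a nonzero vector v ∈ ℤ^ρ with Bv = v, then B is the identity matrix. -/
open Matrix Polynomial

/-- **Rigidity in the commutant of a matrix with irreducible characteristic polynomial.**
If `M` is a nonsingular integer matrix whose characteristic polynomial is irreducible over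
`ℚ`, and `B` is a nonsingular integer matrix commuting with `M` fixing a nonzero integer
vector, then `B = 1`. -/
theorem commutant_fixed_vector_eq_one
    {ρ : ℕ} (hρ : 1 ≤ ρ)
    (M : Matrix (Fin ρ) (Fin ρ) ℤ) (hM : M.det ≠ 0)
    (hirr : Irreducible (M.charpoly.map (Int.castRingHom ℚ)))
    (B : Matrix (Fin ρ) (Fin ρ) ℤ) (hB : B.det ≠ 0)
    (hcomm : B * M = M * B)
    (v : Fin ρ → ℤ) (hv : v ≠ 0) (hfix : B.mulVec v = v) :
    B = 1 := by
  have : NeZero ρ := ⟨by omega⟩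
  set Mq : Matrix (Fin ρ) (Fin ρ) ℚ := M.map (Int.castRingHom ℚ) with hMq
  set Bq : Matrix (Fin ρ) (Fin ρ) ℚ := B.map (Int.castRingHom ℚ) with hBq
  set f : (Fin ρ → ℚ) →ₗ[ℚ] (Fin ρ → ℚ) := Matrix.toLinAlgEquiv' Mq with hf
  set g : (Fin ρ → ℚ) →ₗ[ℚ] (Fin ρ → ℚ) := Matrix.toLinAlgEquiv' Bq with hg
  set p : Polynomial ℚ := Mq.charpoly with hp
  have hpmap : p = M.charpoly.map (Int.castRingHom ℚ) := Matrix.charpoly_map M _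
  have hpirr : Irreducible p := hpmap ▸ hirr
  have hpdeg : p.natDegree = ρ := Mq.charpoly_natDegree_eq_dim.trans (Fintype.card_fin ρ)
  -- Cayley–Hamilton for f
  have hCH : Polynomial.aeval f p = 0 := by
    have := Matrix.aeval_self_charpoly Mq
    have h2 := Polynomial.aeval_algHom_apply
      (Matrix.toLinAlgEquiv' (n := Fin ρ) (R := ℚ)).toAlgHom Mq p
    rw [hf]; erw [h2, this, map_zero]
  -- the cast of v
  set v' : Fin ρ → ℚ := fun i => (v i : ℚ) with hv'
  have hv'ne : v' ≠ 0 := by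
    obtain ⟨i, hi⟩ := Function.ne_iff.mp hv
    exact Function.ne_iff.mpr ⟨i, by simpa [hv'] using hi⟩
  -- g fixes v'
  have hgv : g v' = v' := by
    funext i
    have := congrFun hfix i
    simp only [hg, Matrix.toLinAlgEquiv'_apply, Matrix.mulVec, dotProduct,
      Matrix.map_apply, hv', hBq, Int.coe_castRingHom] at *
    exact_mod_cast this
  -- g commutes with f
  have hcommq : Commute g f := by
    have : Bq * Mq = Mq * Bq := by
      rw [hBq, hMq, ← Matrix.map_mul, ← Matrix.map_mul, hcomm]
    simpa [hg, hf, Commute, SemiconjBy, ← _root_.map_mul] using congrArg Matrix.toLinAlgEquiv' this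
  -- the family f^i v'
  set w : Fin ρ → (Fin ρ → ℚ) := fun i => (f ^ (i : ℕ)) v' with hw
  -- g fixes each w i
  have hgw : ∀ i, g (w i) = w i := by
    intro i
    have hc : Commute g (f ^ (i : ℕ)) := hcommq.pow_right _
    have : (g * f ^ (i : ℕ)) v' = (f ^ (i : ℕ) * g) v' := by rw [hc]
    simpa [hw, Module.End.mul_apply, hgv] using this
  -- linear independence of w
  have hli : LinearIndependent ℚ w := by
    rw [Fintype.linearIndependent_iff]
    intro c hc
    by_contra hcne
    push_neg at hcne
    obtain ⟨j, hj⟩ := hcne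
    set q : Polynomial ℚ := ∑ i : Fin ρ, Polynomial.C (c i) * Polynomial.X ^ (i : ℕ) with hq
    have hqne : q ≠ 0 := by
      intro h0
      apply hj
      have := congrArg (fun r => Polynomial.coeff r (j : ℕ)) h0
      simpa [hq, Polynomial.finset_sum_coeff, Polynomial.coeff_C_mul,
        Polynomial.coeff_X_pow, Fin.val_eq_val] using this
    have hqdeg : q.degree < ρ := Polynomial.degree_sum_fin_lt c
    have hqv : (Polynomial.aeval f q) v' = 0 := by
      have : (Polynomial.aeval f q) v' = ∑ i : Fin ρ, c i • (f ^ (i : ℕ)) v' := by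
        simp [hq, map_sum, Polynomial.aeval_mul, Polynomial.aeval_X_pow,
          Algebra.smul_def, Module.End.mul_apply, LinearMap.sum_apply,
          Polynomial.aeval_C, Module.algebraMap_end_apply]
      rw [this]
      simpa [hw] using hc
    have hndvd : ¬ p ∣ q := by
      intro hdvd
      have := Polynomial.degree_le_of_dvd hdvd hqne
      have hpd : (ρ : WithBot ℕ) ≤ p.degree := by
        rw [Polynomial.degree_eq_natDegree hpirr.ne_zero, hpdeg]
      exact absurd (lt_of_lt_of_le hqdeg (hpd.trans this)) (lt_irrefl _)
    have hcop : IsCoprime p q := (hpirr.coprime_iff_not_dvd).mpr hndvd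
    obtain ⟨a, b, hab⟩ := hcop
    have : v' = 0 := by
      have h1 : (Polynomial.aeval f (a * p + b * q)) v' = v' := by
        rw [hab]; simp
      rw [map_add, _root_.map_mul, _root_.map_mul, hCH] at h1
      simp only [mul_zero, LinearMap.zero_apply, LinearMap.add_apply,
        Module.End.mul_apply, hqv, map_zero, zero_add] at h1
      simpa using h1.symm
    exact hv'ne this
  -- w is a basis, g = id on it
  have hcard : Fintype.card (Fin ρ) = Module.finrank ℚ (Fin ρ → ℚ) := by simp
  have : Nonempty (Fin ρ) := ⟨⟨0, by omega⟩⟩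
  set bb := basisOfLinearIndependentOfCardEqFinrank hli hcard with hbb
  have hgid : g = LinearMap.id := by
    apply bb.ext
    intro i
    have : bb i = w i := by rw [hbb, coe_basisOfLinearIndependentOfCardEqFinrank]
    rw [this, hgw]
    rfl
  have hBq1 : Bq = 1 := by
    apply (Matrix.toLinAlgEquiv' (n := Fin ρ) (R := ℚ)).injective
    rw [← hg, hgid, Matrix.toLinAlgEquiv'_one]
  ext i j
  have := congrFun (congrFun hBq1 i) j
  simp only [hBq, Matrix.map_apply, Int.coe_castRingHom] at this
  rcases eq_or_ne i j with h | h
  · subst h; simpa [Matrix.one_apply] using Int.cast_injective (α := ℚ) (by simpa [Matrix.one_apply] using this)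
  · simp only [Matrix.one_apply_ne h]
    have : (B i j : ℚ) = 0 := by simpa [Matrix.one_apply_ne h] using this
    exact_mod_cast this
end

section
/- Lemma (positive definiteness and determinant of the covariance form). Let d ≥ 1, J an index set, (ℓ_j)_{j∈J} vectors in ℤ^d and p_j > 0 with Σ_j p_j = 1, Σ_j p_j |ℓ_j|² < ∞ and Σ_j p_j ℓ_j = 0, and suppose the vectors {ℓ_j : j∈J} span ℝ^d over ℝ. Let Q(u) = Σ_{j∈J} p_j ⟨ℓ_j, u⟩² and let Λ be the symmetric d×d matrix with ⟨Λu, u⟩ = Q(u). Then Q is positive definite. If moreover J = {1, …, d+1}, then det Λ = det(Ũ)² · ∏_{j=1}^{d+1} p_j, where Ũ is the d×d matrix whose i-th row is ℓ_{i+1} − ℓ_1 (i = 1, …, d); in particular the factor det(Ũ)² does not depend on the p_j. -/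
open Matrix

/-- **Positive definiteness and determinant of the covariance form.**
Let `ℓ_j ∈ ℤ^d`, `p_j > 0` with `Σ p_j = 1`, finite second moment, centered, and suppose
the steps span `ℝ^d`.  Then the quadratic form `Q(u) = Σ_j p_j ⟨ℓ_j,u⟩²` (with matrix `Λ`)
is positive definite; and if `J` has exactly `d+1` elements, then
`det Λ = det(Ũ)² ∏_j p_j` where the `i`-th row of `Ũ` is `ℓ_{i+1} - ℓ_1`. -/
theorem covariance_form_posDef_and_det
    {d : ℕ} (hd : 1 ≤ d)
    {J : Type*} [Countable J] (ℓ : J → (Fin d → ℤ)) (p : J → ℝ)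
    (hp : ∀ j, 0 < p j) (hp1 : HasSum p 1)
    (hmom2 : Summable fun j => p j * ∑ i, (ℓ j i : ℝ) ^ 2)
    (hcent : ∀ i, ∑' j, p j * (ℓ j i : ℝ) = 0)
    (hspan : Submodule.span ℝ (Set.range fun j => fun i => ((ℓ j i : ℝ))) = ⊤)
    (Λ : Matrix (Fin d) (Fin d) ℝ) (hΛsymm : Λ.IsSymm)
    (hΛ : ∀ u : Fin d → ℝ, Λ.mulVec u ⬝ᵥ u = ∑' j, p j * (∑ i, (ℓ j i : ℝ) * u i) ^ 2) :
    Λ.PosDef ∧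
    ∀ e : Fin (d + 1) ≃ J,
      Λ.det = (Matrix.det (Matrix.of fun i k : Fin d =>
          ((ℓ (e i.succ) k : ℝ) - (ℓ (e 0) k : ℝ)))) ^ 2 * ∏ i : Fin (d + 1), p (e i) := by
  refine ⟨?_, ?_⟩
  · -- summability
    have hS : ∀ u : Fin d → ℝ, Summable fun j => p j * (∑ i, (ℓ j i : ℝ) * u i) ^ 2 := by
      intro u
      refine Summable.of_nonneg_of_le (fun j => mul_nonneg (hp j).le (sq_nonneg _)) (fun j => ?_)
        ((hmom2.mul_right (∑ i, u i ^ 2)))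
      have := Finset.sum_mul_sq_le_sq_mul_sq Finset.univ (fun i => (ℓ j i : ℝ)) u
      have hpj := (hp j).le
      calc p j * (∑ i, (ℓ j i : ℝ) * u i) ^ 2
          ≤ p j * ((∑ i, (ℓ j i : ℝ) ^ 2) * ∑ i, u i ^ 2) := by
            exact mul_le_mul_of_nonneg_left this hpj
        _ = p j * (∑ i, (ℓ j i : ℝ) ^ 2) * ∑ i, u i ^ 2 := by ring
    rw [Matrix.posDef_iff_dotProduct_mulVec]
    constructor
    · -- Hermitian
      ext a b
      simpa [Matrix.conjTranspose_apply] using (hΛsymm.apply a b)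
    · intro x hx
      have hsx : (star x ⬝ᵥ Λ *ᵥ x) = Λ.mulVec x ⬝ᵥ x := by
        rw [dotProduct_comm]; rfl
      rw [hsx, hΛ x]
      -- find j₀ with nonzero inner product
      have hex : ∃ j, (∑ i, (ℓ j i : ℝ) * x i) ≠ 0 := by
        by_contra hall
        push_neg at hall
        apply hx
        set φ : (Fin d → ℝ) →ₗ[ℝ] ℝ := ∑ i, x i • LinearMap.proj i with hφ
        have hφapp : ∀ v : Fin d → ℝ, φ v = ∑ i, (v i) * x i := by
          intro v
          simp [hφ, LinearMap.sum_apply, mul_comm]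
        have hker : Submodule.span ℝ (Set.range fun j => fun i => ((ℓ j i : ℝ))) ≤ LinearMap.ker φ := by
          rw [Submodule.span_le]
          rintro _ ⟨j, rfl⟩
          simp only [SetLike.mem_coe, LinearMap.mem_ker, hφapp]
          exact hall j
        rw [hspan, top_le_iff] at hker
        have hφx : φ x = 0 := by
          have : x ∈ LinearMap.ker φ := by rw [hker]; trivial
          simpa using this
        rw [hφapp] at hφx
        have : ∀ i, x i = 0 := by
          intro i
          have h0 : ∑ i, x i * x i = 0 := hφx
          have := Finset.sum_eq_zero_iff_of_nonneg (fun i _ => mul_self_nonneg (x i)) |>.mp h0 i (Finset.mem_univ i)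
          exact mul_self_eq_zero.mp this
        funext i; exact this i
      obtain ⟨j₀, hj₀⟩ := hex
      exact Summable.tsum_pos (hS x) (fun j => mul_nonneg (hp j).le (sq_nonneg _)) j₀
        (mul_pos (hp j₀) (pow_pos (abs_pos.mpr hj₀) 2 |>.trans_eq (by rw [sq_abs])))
  · intro e
    haveI : Fintype J := Fintype.ofEquiv _ e
    set f : Fin (d+1) → Fin d → ℝ := fun j i => (ℓ (e j) i : ℝ) with hf
    set q : Fin (d+1) → ℝ := fun j => p (e j) with hq
    have hΛ' : ∀ u : Fin d → ℝ, Λ.mulVec u ⬝ᵥ u = ∑ j, q j * (∑ i, f j i * u i) ^ 2 := by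
      intro u
      rw [hΛ u, tsum_fintype]
      exact (Equiv.sum_comp e (fun j => p j * (∑ i, (ℓ j i : ℝ) * u i) ^ 2)).symm
    have hcent' : ∀ i, ∑ j, q j * f j i = 0 := by
      intro i
      have h := hcent i
      rw [tsum_fintype] at h
      rw [← h]
      exact Equiv.sum_comp e (fun j => p j * (ℓ j i : ℝ))
    have hq1 : ∑ j, q j = 1 := by
      have h := hp1.tsum_eq
      rw [tsum_fintype] at h
      rw [← h]
      exact Equiv.sum_comp e p
    -- diagonal / off-diagonal entries of Λ
    have hdot : ∀ (j : Fin (d+1)) (a : Fin d), (∑ i, f j i * (Pi.single a 1 : Fin d → ℝ) i) = f j a := by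
      intro j a
      rw [show (∑ i, f j i * (Pi.single a 1 : Fin d → ℝ) i) = f j ⬝ᵥ Pi.single a 1 from rfl,
        dotProduct_single, mul_one]
    have hdiag : ∀ a, Λ a a = ∑ j, q j * (f j a * f j a) := by
      intro a
      have h1 := hΛ' (Pi.single a 1)
      have hL : Λ.mulVec (Pi.single a 1) ⬝ᵥ Pi.single a 1 = Λ a a := by
        rw [Matrix.mulVec_single, dotProduct_single]
        simp
      rw [hL] at h1
      simp only [hdot] at h1
      rw [h1]
      exact Finset.sum_congr rfl fun j _ => by ring
    have hentry : ∀ a b, Λ a b = ∑ j, q j * (f j a * f j b) := by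
      intro a b
      rcases eq_or_ne a b with rfl | hab
      · exact hdiag a
      · set u : Fin d → ℝ := Pi.single a 1 + Pi.single b 1 with hu
        have h2 := hΛ' u
        have hL : Λ.mulVec u ⬝ᵥ u = Λ a a + Λ a b + (Λ b a + Λ b b) := by
          rw [hu, Matrix.mulVec_add, add_dotProduct, dotProduct_add, dotProduct_add,
            Matrix.mulVec_single, Matrix.mulVec_single]
          simp [dotProduct_single]
          ring
        have hR : ∀ j : Fin (d+1), (∑ i, f j i * u i) = f j a + f j b := by
          intro j
          calc ∑ i, f j i * u i
              = ∑ i, (f j i * (Pi.single a 1 : Fin d → ℝ) i + f j i * (Pi.single b 1 : Fin d → ℝ) i) := by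
                refine Finset.sum_congr rfl fun i _ => ?_
                rw [hu]; simp [mul_add]
            _ = f j a + f j b := by rw [Finset.sum_add_distrib, hdot, hdot]
        rw [hL] at h2
        simp only [hR] at h2
        have hexp : ∑ j, q j * (f j a + f j b)^2
            = (∑ j, q j * (f j a * f j a)) + 2 * (∑ j, q j * (f j a * f j b))
              + (∑ j, q j * (f j b * f j b)) := by
          rw [Finset.mul_sum, ← Finset.sum_add_distrib, ← Finset.sum_add_distrib]
          exact Finset.sum_congr rfl fun j _ => by ring
        rw [hexp, ← hdiag a, ← hdiag b] at h2
        have hba : Λ b a = Λ a b := hΛsymm.apply a b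
        linarith
    -- the matrices
    set M : Matrix (Fin (d+1)) (Fin (d+1)) ℝ := Matrix.of fun j => Fin.cons (1:ℝ) (f j) with hM
    set P : Matrix (Fin (d+1)) (Fin (d+1)) ℝ := Matrix.diagonal q with hP
    set N : Matrix (Fin (d+1)) (Fin (d+1)) ℝ := Mᵀ * P * M with hN
    have hMapp : ∀ j a, M j a = (Fin.cons (1:ℝ) (f j) : Fin (d+1) → ℝ) a := fun j a => rfl
    have hNentry : ∀ a b, N a b = ∑ j, M j a * (q j * M j b) := by
      intro a b
      rw [hN, Matrix.mul_assoc, Matrix.mul_apply]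
      exact Finset.sum_congr rfl fun j _ => by
        rw [Matrix.transpose_apply, hP, Matrix.diagonal_mul]
    have hN00 : N 0 0 = 1 := by
      rw [hNentry]
      simp only [hMapp, Fin.cons_zero, one_mul, mul_one]
      exact hq1
    have hNa0 : ∀ a : Fin d, N a.succ 0 = 0 := by
      intro a
      rw [hNentry]
      simp only [hMapp, Fin.cons_zero, Fin.cons_succ, mul_one]
      rw [← hcent' a]
      exact Finset.sum_congr rfl fun j _ => by ring
    have hNab : ∀ a b : Fin d, N a.succ b.succ = Λ a b := by
      intro a b
      rw [hNentry, hentry]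
      simp only [hMapp, Fin.cons_succ]
      exact Finset.sum_congr rfl fun j _ => by ring
    -- det N = det Λ
    have hsub : N.submatrix Fin.succ Fin.succ = Λ := by
      ext a b
      exact hNab a b
    have hdetN : N.det = Λ.det := by
      rw [Matrix.det_succ_column_zero, Fin.sum_univ_succ]
      simp only [hNa0, hN00, Fin.val_zero, pow_zero, one_mul, mul_one, mul_zero, zero_mul,
        Finset.sum_const_zero, add_zero, Fin.succAbove_zero, hsub]
    -- det N = (det M)^2 * ∏ q
    have hdetN2 : N.det = M.det ^ 2 * ∏ j, q j := by
      rw [hN, Matrix.det_mul, Matrix.det_mul, Matrix.det_transpose, hP, Matrix.det_diagonal]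
      ring
    -- row reduction
    set E : Matrix (Fin (d+1)) (Fin (d+1)) ℝ :=
      Matrix.of fun a b => if a = b then 1 else if b = 0 then -1 else 0 with hE
    have hdetE : E.det = 1 := by
      have ht : E.BlockTriangular OrderDual.toDual := by
        intro i j hij
        have hij' : i < j := hij
        have h1 : i ≠ j := ne_of_lt hij'
        have h2 : j ≠ 0 := Fin.pos_iff_ne_zero.mp (lt_of_le_of_lt (Fin.zero_le i) hij')
        simp [hE, h1, h2]
      rw [Matrix.det_of_lowerTriangular E ht]
      simp [hE]
    have hEM0 : ∀ b, (E * M) 0 b = M 0 b := by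
      intro b
      rw [Matrix.mul_apply, Fin.sum_univ_succ]
      have : ∀ c : Fin d, E 0 c.succ * M c.succ b = 0 := by
        intro c
        have : (0 : Fin (d+1)) ≠ c.succ := (Fin.succ_ne_zero c).symm
        simp [hE, this, Fin.succ_ne_zero c]
      simp only [this, Finset.sum_const_zero, add_zero]
      simp [hE]
    have hEMs : ∀ (a : Fin d) (b : Fin (d+1)), (E * M) a.succ b = M a.succ b - M 0 b := by
      intro a b
      rw [Matrix.mul_apply, Fin.sum_univ_succ]
      have h0 : E a.succ 0 * M 0 b = -M 0 b := by
        simp [hE, Fin.succ_ne_zero a]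
      have h1 : ∀ c : Fin d, E a.succ c.succ * M c.succ b = if c = a then M c.succ b else 0 := by
        intro c
        by_cases hc : c = a
        · subst hc; simp [hE]
        · have : a.succ ≠ c.succ := fun h => hc (Fin.succ_injective _ h).symm
          simp [hE, this, hc, Fin.succ_ne_zero c]
      simp only [h1, h0, Finset.sum_ite_eq' Finset.univ a (fun c => M c.succ b)]
      simp only [Finset.mem_univ, if_true]
      ring
    have hdetEM : (E * M).det = M.det := by
      rw [Matrix.det_mul, hdetE, one_mul]
    -- det (E*M) = det Ũ
    have hsub2 : (E * M).submatrix Fin.succ Fin.succ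
        = Matrix.of (fun i k : Fin d => f i.succ k - f 0 k) := by
      ext a b
      rw [Matrix.submatrix_apply, hEMs]
      simp [hMapp, Fin.cons_succ]
    have hEMa0 : ∀ a : Fin d, (E * M) a.succ 0 = 0 := by
      intro a
      rw [hEMs]
      simp [hMapp, Fin.cons_zero]
    have hEM00 : (E * M) 0 0 = 1 := by
      rw [hEM0]; simp [hMapp, Fin.cons_zero]
    have hdetM : M.det = (Matrix.of (fun i k : Fin d => f i.succ k - f 0 k)).det := by
      rw [← hdetEM, Matrix.det_succ_column_zero, Fin.sum_univ_succ]
      simp only [hEMa0, hEM00, Fin.val_zero, pow_zero, one_mul, mul_one, mul_zero, zero_mul,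
        Finset.sum_const_zero, add_zero, Fin.succAbove_zero, hsub2]
    -- conclude
    rw [← hdetN, hdetN2, hdetM]
end

section
/- Lemma (lower bound for self-intersections of a one-dimensional walk). Let (Z_n) be a centered random walk on ℤ with finite second moment (d = 1, Σ_j p_j ℓ_j = 0, Σ_j p_j ℓ_j² < ∞). Then for ℙ-almost every ω there exists a constant C(ω) > 0 such that V_n(ω) ≥ C(ω) · n^{3/2} · (log log n)^{−1/2} for all n ≥ 3. -/
open MeasureTheory ProbabilityTheory Filter Finset

noncomputable section

/-- Position of the random walk with steps `X k` at time `n`. -/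
def walkZ {Ω : Type*} (X : ℕ → Ω → ℤ) (n : ℕ) (ω : Ω) : ℤ :=
  ∑ k ∈ Finset.range n, X k ω

/-- Number of self-intersections of the walk up to time `n`:
`V_n(ω) = #{(k,k') : 0 ≤ k,k' < n, Z_k(ω) = Z_{k'}(ω)}`. -/
def selfIntZ {Ω : Type*} (X : ℕ → Ω → ℤ) (n : ℕ) (ω : Ω) : ℕ :=
  ((Finset.range n ×ˢ Finset.range n).filter
    fun kk => walkZ X kk.1 ω = walkZ X kk.2 ω).card

namespace SelfIntAux

/-- increment sum over `[a, a+k)` of an integer sequence -/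
def DfunS (f : ℕ → ℤ) (a k : ℕ) : ℤ := ∑ j ∈ Finset.Ico a (a + k), f j

/-- interval radius -/
def Mival (A : ℝ) (L : ℕ) : ℤ := ⌈A * Real.sqrt L⌉

/-- number of times `k < L` such that the increment since `a` lies in the window -/
def TcntS (A : ℝ) (a L : ℕ) (f : ℕ → ℤ) : ℕ :=
  ((Finset.range L).filter
    fun k => DfunS f a k ∈ Finset.Icc (-(Mival A L)) (Mival A L)).card

def Dfun {Ω : Type*} (X : ℕ → Ω → ℤ) (a k : ℕ) (ω : Ω) : ℤ := DfunS (fun n => X n ω) a k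

def Tcnt {Ω : Type*} (X : ℕ → Ω → ℤ) (A : ℝ) (a L : ℕ) (ω : Ω) : ℕ :=
  TcntS A a L (fun n => X n ω)

/-- the "good window" function: 1/2 if the walk spent at least half the time in the window -/
def gfnS (A : ℝ) (a L : ℕ) (f : ℕ → ℤ) : ℝ :=
  if (L : ℝ) / 2 ≤ TcntS A a L f then 1/2 else 1

def gfn {Ω : Type*} (X : ℕ → Ω → ℤ) (A : ℝ) (a L : ℕ) (ω : Ω) : ℝ :=
  gfnS A a L (fun n => X n ω)

/-- self-intersection pairs inside the window `[a, a+L)` -/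
def Wfin {Ω : Type*} (X : ℕ → Ω → ℤ) (a L : ℕ) (ω : Ω) : Finset (ℕ × ℕ) :=
  (Finset.range L ×ˢ Finset.range L).filter
    fun kk => walkZ X (a + kk.1) ω = walkZ X (a + kk.2) ω

variable {Ω : Type*} (X : ℕ → Ω → ℤ) (ω : Ω)

lemma walk_diff (a k : ℕ) : walkZ X (a + k) ω - walkZ X a ω = Dfun X a k ω := by
  have : walkZ X a ω + Dfun X a k ω = walkZ X (a + k) ω := by
    unfold walkZ Dfun DfunS
    simp only [Finset.range_eq_Ico]
    exact Finset.sum_Ico_consecutive (fun j => X j ω) (Nat.zero_le a) (Nat.le_add_right a k)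
  omega

lemma selfIntZ_mono {n n' : ℕ} (h : n ≤ n') : selfIntZ X n ω ≤ selfIntZ X n' ω := by
  apply Finset.card_le_card
  apply Finset.filter_subset_filter
  exact Finset.product_subset_product (Finset.range_subset_range.2 h) (Finset.range_subset_range.2 h)

lemma le_selfIntZ (n : ℕ) : n ≤ selfIntZ X n ω := by
  classical
  have : (Finset.range n).image (fun k => (k, k)) ⊆
      (Finset.range n ×ˢ Finset.range n).filter
        (fun kk => walkZ X kk.1 ω = walkZ X kk.2 ω) := by
    intro x hx
    simp only [Finset.mem_image] at hx
    obtain ⟨k, hk, rfl⟩ := hx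
    simp [Finset.mem_filter, Finset.mem_product, Finset.mem_range.1 hk]
  calc n = ((Finset.range n).image (fun k => (k, k))).card := by
            rw [Finset.card_image_of_injective _ (fun a b h => by simpa using h)]
            simp
    _ ≤ _ := Finset.card_le_card this

lemma sum_windows (r L n : ℕ) (hrL : r * L ≤ n) :
    ∑ i ∈ Finset.range r, (Wfin X (i * L) L ω).card ≤ selfIntZ X n ω := by
  classical
  set e : ℕ → ℕ × ℕ → ℕ × ℕ := fun i kk => (i * L + kk.1, i * L + kk.2) with he
  have hinj : ∀ i, Function.Injective (e i) := by
    intro i x y h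
    simp only [he, Prod.mk.injEq] at h
    exact Prod.ext (by omega) (by omega)
  have hcard : ∀ i, ((Wfin X (i * L) L ω).image (e i)).card = (Wfin X (i * L) L ω).card :=
    fun i => Finset.card_image_of_injective _ (hinj i)
  have hdisj : ∀ i ∈ Finset.range r, ∀ j ∈ Finset.range r, i ≠ j →
      Disjoint ((Wfin X (i * L) L ω).image (e i)) ((Wfin X (j * L) L ω).image (e j)) := by
    intro i _ j _ hij
    rw [Finset.disjoint_left]
    intro x hx hy
    simp only [Finset.mem_image, Wfin, Finset.mem_filter, Finset.mem_product,
      Finset.mem_range] at hx hy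
    obtain ⟨a, ⟨⟨ha1, _⟩, _⟩, rfl⟩ := hx
    obtain ⟨b, ⟨⟨hb1, _⟩, _⟩, hb⟩ := hy
    have : i * L + a.1 = j * L + b.1 := by
      have := congrArg Prod.fst hb; simpa [he] using this.symm
    rcases Nat.lt_or_ge i j with h | h
    · nlinarith [Nat.succ_le_of_lt h]
    · have : j < i := lt_of_le_of_ne h (Ne.symm hij)
      nlinarith [Nat.succ_le_of_lt this]
  have hsub : (Finset.range r).biUnion (fun i => (Wfin X (i * L) L ω).image (e i)) ⊆
      (Finset.range n ×ˢ Finset.range n).filter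
        (fun kk => walkZ X kk.1 ω = walkZ X kk.2 ω) := by
    intro x hx
    simp only [Finset.mem_biUnion, Finset.mem_image] at hx
    obtain ⟨i, hi, a, ha, rfl⟩ := hx
    simp only [Wfin, Finset.mem_filter, Finset.mem_product, Finset.mem_range] at ha
    obtain ⟨⟨ha1, ha2⟩, ha3⟩ := ha
    have hi' := Finset.mem_range.1 hi
    have h1 : i * L + a.1 < n := by nlinarith [Nat.succ_le_of_lt hi']
    have h2 : i * L + a.2 < n := by nlinarith [Nat.succ_le_of_lt hi']
    simp only [Finset.mem_filter, Finset.mem_product, Finset.mem_range, he]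
    exact ⟨⟨h1, h2⟩, ha3⟩
  calc ∑ i ∈ Finset.range r, (Wfin X (i * L) L ω).card
      = ∑ i ∈ Finset.range r, ((Wfin X (i * L) L ω).image (e i)).card := by
        simp_rw [hcard]
    _ = ((Finset.range r).biUnion (fun i => (Wfin X (i * L) L ω).image (e i))).card :=
        (Finset.card_biUnion hdisj).symm
    _ ≤ _ := Finset.card_le_card hsub


lemma window_lower (a L : ℕ) (A : ℝ) (hL : 1 ≤ L) (hA : 1 ≤ A)
    (hE : (L : ℝ) / 2 ≤ Tcnt X A a L ω) :
    (L : ℝ) * Real.sqrt L / (20 * A) ≤ ((Wfin X a L ω).card : ℝ) := by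
  classical
  set M := Mival A L with hMdef
  set I : Finset ℤ := Finset.Icc (-M) M with hI
  set t0 : Finset ℕ := (Finset.range L).filter
    (fun k => Dfun X a k ω ∈ Finset.Icc (-M) M) with ht0
  set c : ℤ → ℕ := fun x => (t0.filter fun k => Dfun X a k ω = x).card with hc
  -- sqrt facts
  have hsL : (1:ℝ) ≤ Real.sqrt L := by
    rw [show (1:ℝ) = Real.sqrt 1 by simp]
    exact Real.sqrt_le_sqrt (by exact_mod_cast hL)
  have hsLpos : (0:ℝ) < Real.sqrt L := lt_of_lt_of_le one_pos hsL
  have hsq : Real.sqrt L * Real.sqrt L = L := Real.mul_self_sqrt (Nat.cast_nonneg L)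
  have hMle : (M : ℝ) ≤ A * Real.sqrt L + 1 := le_of_lt (Int.ceil_lt_add_one _)
  have hMge : A * Real.sqrt L ≤ (M : ℝ) := Int.le_ceil _
  have hMpos : (1:ℝ) ≤ (M:ℝ) := le_trans (by nlinarith) hMge
  -- T = sum of fibers over I
  have hTt0 : Tcnt X A a L ω = t0.card := rfl
  have hT : Tcnt X A a L ω = ∑ x ∈ I, c x := by
    rw [hTt0]
    apply Finset.card_eq_sum_card_fiberwise (f := fun k => Dfun X a k ω)
    intro k hk
    rw [Finset.mem_coe, ht0, Finset.mem_filter] at hk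
    exact hk.2
  -- Cauchy-Schwarz in ℕ
  have hCS : (∑ x ∈ I, c x) ^ 2 ≤ I.card * ∑ x ∈ I, (c x) ^ 2 := by
    have := Finset.sum_mul_sq_le_sq_mul_sq I (fun _ => 1) (fun x => c x)
    simpa using this
  -- sum of fiber squares ≤ Wfin card
  have hfib : ∑ x ∈ I, (c x) ^ 2 ≤ (Wfin X a L ω).card := by
    have hdisj : ∀ x ∈ I, ∀ y ∈ I, x ≠ y →
        Disjoint ((t0.filter fun k => Dfun X a k ω = x) ×ˢ
                  (t0.filter fun k => Dfun X a k ω = x))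
                 ((t0.filter fun k => Dfun X a k ω = y) ×ˢ
                  (t0.filter fun k => Dfun X a k ω = y)) := by
      intro x _ y _ hxy
      rw [Finset.disjoint_left]
      intro p hp hq
      simp only [Finset.mem_product, Finset.mem_filter] at hp hq
      exact hxy (hp.1.2 ▸ hq.1.2 ▸ rfl)
    have hsub : I.biUnion (fun x => (t0.filter fun k => Dfun X a k ω = x) ×ˢ
        (t0.filter fun k => Dfun X a k ω = x)) ⊆ Wfin X a L ω := by
      intro p hp
      simp only [Finset.mem_biUnion, Finset.mem_product, Finset.mem_filter, ht0] at hp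
      obtain ⟨x, _, ⟨⟨⟨h1, _⟩, h2⟩, ⟨⟨h3, _⟩, h4⟩⟩⟩ := hp
      simp only [Wfin, Finset.mem_filter, Finset.mem_product]
      refine ⟨⟨h1, h3⟩, ?_⟩
      have e1 := walk_diff X ω a p.1
      have e2 := walk_diff X ω a p.2
      have : Dfun X a p.1 ω = Dfun X a p.2 ω := by rw [h2, h4]
      omega
    calc ∑ x ∈ I, (c x) ^ 2
        = ∑ x ∈ I, ((t0.filter fun k => Dfun X a k ω = x) ×ˢ
            (t0.filter fun k => Dfun X a k ω = x)).card := by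
          apply Finset.sum_congr rfl
          intro x _
          rw [Finset.card_product]; ring
      _ = (I.biUnion _).card := (Finset.card_biUnion hdisj).symm
      _ ≤ (Wfin X a L ω).card := Finset.card_le_card hsub
  -- card I
  have hcardI : (I.card : ℝ) = 2 * (M:ℝ) + 1 := by
    rw [hI, Int.card_Icc]
    have : M + 1 - (-M) = 2*M + 1 := by ring
    rw [this]
    have h2 : (0:ℤ) ≤ 2*M + 1 := by
      have : (1:ℤ) ≤ M := by exact_mod_cast hMpos
      omega
    have h3 : ((2*M+1).toNat : ℝ) = ((2*M+1 : ℤ) : ℝ) := by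
      exact_mod_cast congrArg (fun z : ℤ => (z : ℝ)) (Int.toNat_of_nonneg h2)
    rw [h3]; push_cast; ring
  -- assemble over ℝ
  have hTR : ((Tcnt X A a L ω : ℝ))^2 ≤ (2*(M:ℝ)+1) * ((Wfin X a L ω).card : ℝ) := by
    have h1 : ((∑ x ∈ I, c x : ℕ) : ℝ)^2 ≤ ((I.card * ∑ x ∈ I, (c x) ^ 2 : ℕ) : ℝ) := by
      exact_mod_cast hCS
    have h2 : ((∑ x ∈ I, (c x)^2 : ℕ):ℝ) ≤ ((Wfin X a L ω).card : ℝ) := by exact_mod_cast hfib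
    rw [hT]
    push_cast at h1 ⊢
    calc ((∑ x ∈ I, (c x:ℝ)))^2 ≤ (I.card : ℝ) * (∑ x ∈ I, (c x:ℝ)^2) := by push_cast at h1 ⊢; linarith
      _ ≤ (2*(M:ℝ)+1) * ((Wfin X a L ω).card : ℝ) := by
          rw [hcardI]
          apply mul_le_mul_of_nonneg_left _ (by positivity)
          push_cast at h2 ⊢; linarith
  have hW0 : (0:ℝ) ≤ ((Wfin X a L ω).card : ℝ) := Nat.cast_nonneg _
  have hL2 : ((L:ℝ)/2)^2 ≤ ((Tcnt X A a L ω : ℝ))^2 := by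
    apply sq_le_sq'
    · nlinarith [Nat.cast_nonneg (α := ℝ) (Tcnt X A a L ω)]
    · exact hE
  have h5 : 2*(M:ℝ)+1 ≤ 5 * A * Real.sqrt L := by nlinarith
  have hLpos : (0:ℝ) < L := by exact_mod_cast hL
  -- (L/2)^2 ≤ 5A√L · W  ⟹  L√L/(20A) ≤ W
  have key : (L:ℝ)^2/4 ≤ 5 * A * Real.sqrt L * ((Wfin X a L ω).card : ℝ) := by
    have := le_trans hL2 hTR
    nlinarith
  rw [div_le_iff₀ (by positivity)]
  nlinarith [mul_pos (mul_pos (by norm_num : (0:ℝ) < 5) (lt_of_lt_of_le one_pos hA)) hsLpos]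

def extS (S : Finset ℕ) (y : (↥S → ℤ)) : ℕ → ℤ :=
  fun n => if h : n ∈ S then y ⟨n, h⟩ else 0

variable {Ω : Type*} [MeasurableSpace Ω] {P : Measure Ω} [IsProbabilityMeasure P]
variable {X : ℕ → Ω → ℤ}

lemma gfn_eq (A : ℝ) (a L : ℕ) : gfn X A a L =
    fun ω => if (L:ℝ)/2 ≤ (Tcnt X A a L ω : ℝ) then (1/2 : ℝ) else 1 := rfl

section Meas
variable (hXmeas : ∀ k, Measurable (X k))
include hXmeas

lemma measurable_Dfun (a k : ℕ) : Measurable (fun ω => Dfun X a k ω) := by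
  unfold Dfun DfunS
  exact Finset.measurable_sum _ (fun j _ => hXmeas j)

lemma measurable_DfunR (a k : ℕ) : Measurable (fun ω => (Dfun X a k ω : ℝ)) :=
  (measurable_of_countable _).comp (measurable_Dfun hXmeas a k)

lemma msetD (a k : ℕ) (t : Finset ℤ) : MeasurableSet {ω | Dfun X a k ω ∈ t} :=
  (measurable_Dfun hXmeas a k) (MeasurableSpace.measurableSet_top (s := (↑t : Set ℤ)))

lemma Tcnt_cast (A : ℝ) (a L : ℕ) (ω : Ω) : (Tcnt X A a L ω : ℝ) =
    ∑ k ∈ Finset.range L,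
      if Dfun X a k ω ∈ Finset.Icc (-(Mival A L)) (Mival A L) then (1:ℝ) else 0 := by
  rw [Tcnt, TcntS, Finset.card_filter, Nat.cast_sum]
  exact Finset.sum_congr rfl (fun k _ => by
    rw [Nat.cast_ite]
    norm_num
    rfl)

lemma measurable_TcntR (A : ℝ) (a L : ℕ) :
    Measurable (fun ω => (Tcnt X A a L ω : ℝ)) := by
  simp_rw [Tcnt_cast hXmeas A a L]
  exact Finset.measurable_sum _ (fun k _ =>
    Measurable.ite (msetD hXmeas a k _) measurable_const measurable_const)

lemma msetE (A : ℝ) (a L : ℕ) :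
    MeasurableSet {ω | (L:ℝ)/2 ≤ (Tcnt X A a L ω : ℝ)} :=
  measurableSet_le measurable_const (measurable_TcntR hXmeas A a L)

lemma measurable_gfn (A : ℝ) (a L : ℕ) : Measurable (gfn X A a L) := by
  rw [gfn_eq]
  exact Measurable.ite (msetE hXmeas A a L) measurable_const measurable_const

end Meas

lemma gfn_nonneg (A : ℝ) (a L : ℕ) (ω : Ω) : 0 ≤ gfn X A a L ω := by
  rw [gfn_eq]; dsimp only; split <;> norm_num

lemma gfn_le_one (A : ℝ) (a L : ℕ) (ω : Ω) : gfn X A a L ω ≤ 1 := by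
  rw [gfn_eq]; dsimp only; split <;> norm_num

section Prob
variable (hXmeas : ∀ k, Measurable (X k)) {v A : ℝ}
  (hv0 : 0 ≤ v) (h4 : 4 * v ≤ A ^ 2) (hA : 1 ≤ A)
  (hmem : ∀ a k : ℕ, MemLp (fun ω => (Dfun X a k ω : ℝ)) 2 P)
  (hzero : ∀ a k : ℕ, ∫ ω, (Dfun X a k ω : ℝ) ∂P = 0)
  (hvar : ∀ a k : ℕ, variance (fun ω => (Dfun X a k ω : ℝ)) P ≤ k * v)

include hXmeas hv0 h4 hA hmem hzero hvar

lemma window_step_prob (a k L : ℕ) (hkL : k ≤ L) (hL : 1 ≤ L) :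
    (3/4 : ℝ) ≤
      (P {ω | Dfun X a k ω ∈ Finset.Icc (-(Mival A L)) (Mival A L)}).toReal := by
  have hsL : (1:ℝ) ≤ Real.sqrt L := by
    rw [show (1:ℝ) = Real.sqrt 1 by simp]
    exact Real.sqrt_le_sqrt (by exact_mod_cast hL)
  have hsq : Real.sqrt L * Real.sqrt L = L := Real.mul_self_sqrt (Nat.cast_nonneg L)
  have hApos : (0:ℝ) < A := lt_of_lt_of_le one_pos hA
  have hc : (0:ℝ) < A * Real.sqrt L := by nlinarith
  -- complement ⊆ large deviation set
  have hsub : {ω | Dfun X a k ω ∈ Finset.Icc (-(Mival A L)) (Mival A L)}ᶜ ⊆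
      {ω | A * Real.sqrt L ≤
        |(fun ω => (Dfun X a k ω : ℝ)) ω - ∫ ω', (Dfun X a k ω' : ℝ) ∂P|} := by
    intro ω hω
    simp only [Set.mem_compl_iff, Set.mem_setOf_eq, Finset.mem_Icc, not_and_or, not_le] at hω
    have hMge : A * Real.sqrt L ≤ ((Mival A L : ℤ) : ℝ) := Int.le_ceil _
    have habs : (Mival A L : ℤ) ≤ |Dfun X a k ω| := by
      rcases hω with h | h
      · calc (Mival A L : ℤ) ≤ -(Dfun X a k ω) := by omega
          _ ≤ |Dfun X a k ω| := by rw [← abs_neg]; exact le_abs_self _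
      · exact le_trans (le_of_lt h) (le_abs_self _)
    simp only [Set.mem_setOf_eq, hzero a k, sub_zero]
    calc A * Real.sqrt L ≤ ((Mival A L : ℤ) : ℝ) := hMge
      _ ≤ |((Dfun X a k ω : ℤ) : ℝ)| := by rw [← Int.cast_abs]; exact_mod_cast habs
  have hcheb := meas_ge_le_variance_div_sq (μ := P) (hmem a k) hc
  have hnum : variance (fun ω => (Dfun X a k ω : ℝ)) P / (A * Real.sqrt L)^2 ≤ v / A^2 := by
    have h1 : variance (fun ω => (Dfun X a k ω : ℝ)) P ≤ L * v := by
      refine le_trans (hvar a k) ?_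
      have : (k:ℝ) ≤ L := by exact_mod_cast hkL
      nlinarith
    have hc2 : (A*Real.sqrt L)^2 = A^2 * L := by rw [mul_pow]; nlinarith [hsq]
    rw [hc2]
    have hLpos : (0:ℝ) < L := by exact_mod_cast hL
    have hA2L : (0:ℝ) < A^2 * L := by positivity
    calc variance (fun ω => (Dfun X a k ω : ℝ)) P / (A^2*L) ≤ (L*v)/(A^2*L) := by gcongr
      _ = v / A^2 := by field_simp
  have hsubm : P ({ω | Dfun X a k ω ∈ Finset.Icc (-(Mival A L)) (Mival A L)}ᶜ)
      ≤ ENNReal.ofReal (v / A^2) := by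
    refine le_trans (measure_mono hsub) (le_trans hcheb ?_)
    exact ENNReal.ofReal_le_ofReal hnum
  have hmeasS : MeasurableSet {ω | Dfun X a k ω ∈ Finset.Icc (-(Mival A L)) (Mival A L)} :=
    msetD hXmeas a k _
  have hsplit : P {ω | Dfun X a k ω ∈ Finset.Icc (-(Mival A L)) (Mival A L)} +
      P ({ω | Dfun X a k ω ∈ Finset.Icc (-(Mival A L)) (Mival A L)}ᶜ) = 1 := by
    rw [measure_add_measure_compl hmeasS, measure_univ]
  have h1 : (P {ω | Dfun X a k ω ∈ Finset.Icc (-(Mival A L)) (Mival A L)}).toReal +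
      (P ({ω | Dfun X a k ω ∈ Finset.Icc (-(Mival A L)) (Mival A L)}ᶜ)).toReal = 1 := by
    rw [← ENNReal.toReal_add (measure_ne_top P _) (measure_ne_top P _), hsplit]
    simp
  have h2 : (P ({ω | Dfun X a k ω ∈ Finset.Icc (-(Mival A L)) (Mival A L)}ᶜ)).toReal ≤ 1/4 := by
    calc (P ({ω | Dfun X a k ω ∈ Finset.Icc (-(Mival A L)) (Mival A L)}ᶜ)).toReal
        ≤ (ENNReal.ofReal (v / A^2)).toReal :=
          ENNReal.toReal_mono ENNReal.ofReal_ne_top hsubm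
      _ ≤ 1/4 := by
          rw [ENNReal.toReal_ofReal (by positivity)]
          rw [div_le_div_iff₀ (by positivity) (by norm_num)]
          nlinarith
  linarith

/-- expectation of the time spent in the window -/
lemma Tcnt_expect (a L : ℕ) :
    (3/4 : ℝ) * L ≤ ∫ ω, (Tcnt X A a L ω : ℝ) ∂P := by
  rcases Nat.eq_zero_or_pos L with hL | hL
  · subst hL
    simp [Tcnt, TcntS]
  have hint : ∀ k, Integrable (fun ω =>
      if Dfun X a k ω ∈ Finset.Icc (-(Mival A L)) (Mival A L) then (1:ℝ) else 0) P := by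
    intro k
    refine Integrable.mono' (integrable_const 1) ?_ ?_
    · exact (Measurable.ite (msetD hXmeas a k _) measurable_const
        measurable_const).aestronglyMeasurable
    · filter_upwards with ω
      split <;> simp
  calc (3/4 : ℝ) * L = ∑ k ∈ Finset.range L, (3/4 : ℝ) := by
        rw [Finset.sum_const, Finset.card_range]; ring
    _ ≤ ∑ k ∈ Finset.range L,
        (P {ω | Dfun X a k ω ∈ Finset.Icc (-(Mival A L)) (Mival A L)}).toReal := by
        apply Finset.sum_le_sum
        intro k hk
        exact window_step_prob hXmeas hv0 h4 hA hmem hzero hvar a k L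
          (le_of_lt (Finset.mem_range.1 hk)) hL
    _ = ∫ ω, (Tcnt X A a L ω : ℝ) ∂P := by
        simp_rw [Tcnt_cast hXmeas A a L]
        rw [integral_finset_sum _ (fun k _ => hint k)]
        apply Finset.sum_congr rfl
        intro k hk
        have : (fun ω => if Dfun X a k ω ∈ Finset.Icc (-(Mival A L)) (Mival A L)
            then (1:ℝ) else 0) = Set.indicator
              {ω | Dfun X a k ω ∈ Finset.Icc (-(Mival A L)) (Mival A L)} (fun _ => (1:ℝ)) := by
          funext ω
          rw [Set.indicator_apply]
          rfl
        rw [this]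
        show _ = ∫ ω, Set.indicator _ (fun _ => (1:ℝ)) ω ∂P
        rw [integral_indicator_const _ (msetD hXmeas a k _)]
        simp [mul_comm]
        rfl

/-- each window succeeds with probability at least 1/2 -/
lemma Eset_prob (a L : ℕ) :
    (1/2 : ℝ) ≤ (P {ω | (L:ℝ)/2 ≤ (Tcnt X A a L ω : ℝ)}).toReal := by
  rcases Nat.eq_zero_or_pos L with hL | hL
  · subst hL
    have : {ω : Ω | ((0:ℕ):ℝ)/2 ≤ (Tcnt X A a 0 ω : ℝ)} = Set.univ :=
      Set.eq_univ_of_forall (fun ω => by simp)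
    rw [this]
    simp only [measure_univ, ENNReal.toReal_one]
    norm_num
  set E := {ω | (L:ℝ)/2 ≤ (Tcnt X A a L ω : ℝ)} with hE
  have hmE : MeasurableSet E := msetE hXmeas A a L
  set q := (P E).toReal with hq
  have hTle : ∀ ω, (Tcnt X A a L ω : ℝ) ≤ (L:ℝ)/2 + Set.indicator E (fun _ => (L:ℝ)/2) ω := by
    intro ω
    by_cases hω : ω ∈ E
    · rw [Set.indicator_of_mem hω]
      have : Tcnt X A a L ω ≤ L := by
        unfold Tcnt TcntS
        apply le_trans (Finset.card_filter_le _ _)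
        simp
      have := (Nat.cast_le (α := ℝ)).2 this
      linarith
    · rw [Set.indicator_of_notMem hω]
      simp only [hE, Set.mem_setOf_eq, not_le] at hω
      linarith [le_of_lt hω]
  have hintT : Integrable (fun ω => (Tcnt X A a L ω : ℝ)) P := by
    refine Integrable.mono' (integrable_const (L:ℝ)) ?_ ?_
    · exact (measurable_TcntR hXmeas A a L).aestronglyMeasurable
    · filter_upwards with ω
      rw [Real.norm_eq_abs, abs_of_nonneg (by positivity)]
      have : Tcnt X A a L ω ≤ L := by
        unfold Tcnt TcntS
        apply le_trans (Finset.card_filter_le _ _)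
        simp
      exact_mod_cast this
  have hintI : Integrable (fun ω => (L:ℝ)/2 + Set.indicator E (fun _ => (L:ℝ)/2) ω) P := by
    apply Integrable.add (integrable_const _)
    exact (integrable_const ((L:ℝ)/2)).indicator hmE
  have hET := Tcnt_expect hXmeas hv0 h4 hA hmem hzero hvar a L
  have hup : ∫ ω, (Tcnt X A a L ω : ℝ) ∂P ≤ (L:ℝ)/2 + (L:ℝ)/2 * q := by
    calc ∫ ω, (Tcnt X A a L ω : ℝ) ∂P
        ≤ ∫ ω, ((L:ℝ)/2 + Set.indicator E (fun _ => (L:ℝ)/2) ω) ∂P :=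
          integral_mono hintT hintI hTle
      _ = (L:ℝ)/2 + (L:ℝ)/2 * q := by
          rw [integral_add (integrable_const _) ((integrable_const ((L:ℝ)/2)).indicator hmE)]
          rw [integral_const, integral_indicator_const _ hmE]
          simp [hq, mul_comm]
          exact Or.inl rfl
  have hLpos : (0:ℝ) < L := by exact_mod_cast hL
  nlinarith

end Prob

lemma gfn_prod_eq_pow (A : ℝ) (L r : ℕ) (ω : Ω) :
    ∏ i ∈ Finset.range r, gfn X A (i*L) L ω =
      ((1:ℝ)/2) ^ ((Finset.range r).filter
        (fun i => (L:ℝ)/2 ≤ (Tcnt X A (i*L) L ω : ℝ))).card := by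
  simp_rw [gfn_eq]
  rw [Finset.prod_ite (fun _ => (1/2:ℝ)) (fun _ => (1:ℝ))]
  simp [Finset.prod_const]

lemma gfn_local (A : ℝ) (a L : ℕ) (S : Finset ℕ) (hsub : Finset.Ico a (a+L) ⊆ S) (ω : Ω) :
    gfn X A a L ω = gfnS A a L (extS S (fun i : ↥S => X i ω)) := by
  have hD : ∀ k, k < L → DfunS (extS S (fun i : ↥S => X i ω)) a k
      = DfunS (fun n => X n ω) a k := by
    intro k hk
    unfold DfunS extS
    apply Finset.sum_congr rfl
    intro j hj
    rw [Finset.mem_Ico] at hj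
    have hjS : j ∈ S := hsub (Finset.mem_Ico.2 ⟨hj.1, by omega⟩)
    rw [dif_pos hjS]
  have hT : TcntS A a L (extS S (fun i : ↥S => X i ω)) = TcntS A a L (fun n => X n ω) := by
    unfold TcntS
    apply congrArg
    apply Finset.filter_congr
    intro k hk
    rw [hD k (Finset.mem_range.1 hk)]
  show gfnS A a L (fun n => X n ω) = _
  unfold gfnS
  rw [hT]

lemma prod_gfn_local (A : ℝ) (L r : ℕ) (ω : Ω) :
    ∏ i ∈ Finset.range r, gfn X A (i*L) L ω =
      (fun y : (↥(Finset.range (r*L)) → ℤ) =>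
        ∏ i ∈ Finset.range r, gfnS A (i*L) L (extS (Finset.range (r*L)) y))
        (fun i : ↥(Finset.range (r*L)) => X i ω) := by
  dsimp only
  apply Finset.prod_congr rfl
  intro i hi
  apply gfn_local
  intro j hj
  rw [Finset.mem_Ico] at hj
  rw [Finset.mem_range]
  have h1 : i < r := Finset.mem_range.1 hi
  have h2 : (i+1) * L ≤ r * L := Nat.mul_le_mul_right L (by omega)
  have h3 : (i+1) * L = i*L + L := by ring
  omega

lemma indep_prod_gfn (hXmeas : ∀ k, Measurable (X k))
    (hindep : iIndepFun X P)
    (A : ℝ) (L r : ℕ) :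
    IndepFun (fun ω => ∏ i ∈ Finset.range r, gfn X A (i*L) L ω) (gfn X A (r*L) L) P := by
  have hd : Disjoint (Finset.range (r*L)) (Finset.Ico (r*L) (r*L+L)) := by
    rw [Finset.disjoint_left]
    intro x hx hy
    rw [Finset.mem_range] at hx
    rw [Finset.mem_Ico] at hy
    omega
  have base := hindep.indepFun_finset (Finset.range (r*L)) (Finset.Ico (r*L) (r*L+L)) hd hXmeas
  set F : (↥(Finset.range (r*L)) → ℤ) → ℝ := fun y =>
    ∏ i ∈ Finset.range r, gfnS A (i*L) L (extS (Finset.range (r*L)) y) with hF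
  set G : (↥(Finset.Ico (r*L) (r*L+L)) → ℤ) → ℝ := fun y =>
    gfnS A (r*L) L (extS (Finset.Ico (r*L) (r*L+L)) y) with hG
  have hcomp := base.comp (φ := F) (ψ := G) (measurable_of_countable F) (measurable_of_countable G)
  have e1 : (fun ω => ∏ i ∈ Finset.range r, gfn X A (i*L) L ω)
      = F ∘ (fun ω (i : ↥(Finset.range (r*L))) => X i ω) := by
    funext ω
    exact prod_gfn_local A L r ω
  have e2 : gfn X A (r*L) L = G ∘ (fun ω (i : ↥(Finset.Ico (r*L) (r*L+L))) => X i ω) := by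
    funext ω
    exact gfn_local A (r*L) L _ (by intro j hj; rwa [Finset.mem_Ico] at hj ⊢) ω
  rw [e1, e2]
  exact hcomp

lemma integrable_gfn (hXmeas : ∀ k, Measurable (X k)) (A : ℝ) (a L : ℕ) :
    Integrable (gfn X A a L) P := by
  refine Integrable.mono' (integrable_const 1)
    (measurable_gfn hXmeas A a L).aestronglyMeasurable ?_
  filter_upwards with ω
  rw [Real.norm_eq_abs, abs_of_nonneg (gfn_nonneg A a L ω)]
  exact gfn_le_one A a L ω

lemma integrable_prod_gfn (hXmeas : ∀ k, Measurable (X k)) (A : ℝ) (L r : ℕ) :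
    Integrable (fun ω => ∏ i ∈ Finset.range r, gfn X A (i*L) L ω) P := by
  refine Integrable.mono' (integrable_const 1)
    (Finset.measurable_prod _ (fun i _ => measurable_gfn hXmeas A (i*L) L)).aestronglyMeasurable
    ?_
  filter_upwards with ω
  rw [Real.norm_eq_abs, abs_of_nonneg (Finset.prod_nonneg (fun i _ => gfn_nonneg A (i*L) L ω))]
  exact Finset.prod_le_one (fun i _ => gfn_nonneg A (i*L) L ω)
    (fun i _ => gfn_le_one A (i*L) L ω)

section ProbIndep
variable (hXmeas : ∀ k, Measurable (X k))
  (hindep : iIndepFun X P)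
  {v A : ℝ}
  (hq : ∀ a L : ℕ, (1/2 : ℝ) ≤ (P {ω | (L:ℝ)/2 ≤ (Tcnt X A a L ω : ℝ)}).toReal)

include hXmeas hindep hq

lemma integral_gfn_le (a L : ℕ) : ∫ ω, gfn X A a L ω ∂P ≤ 3/4 := by
  have hind : gfn X A a L = fun ω =>
      1 - Set.indicator {ω | (L:ℝ)/2 ≤ (Tcnt X A a L ω : ℝ)} (fun _ => (1/2:ℝ)) ω := by
    funext ω
    rw [gfn_eq]
    dsimp only
    by_cases hω : (L:ℝ)/2 ≤ (Tcnt X A a L ω : ℝ)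
    · rw [if_pos hω, Set.indicator_of_mem
        (show ω ∈ {ω | (L:ℝ)/2 ≤ (Tcnt X A a L ω : ℝ)} from hω)]
      norm_num
    · rw [if_neg hω, Set.indicator_of_notMem
        (show ω ∉ {ω | (L:ℝ)/2 ≤ (Tcnt X A a L ω : ℝ)} from hω)]
      norm_num
  rw [hind]
  rw [integral_sub (integrable_const 1)
    ((integrable_const ((1/2:ℝ))).indicator (msetE hXmeas A a L))]
  rw [integral_const, integral_indicator_const _ (msetE hXmeas A a L)]
  have := hq a L
  simp only [Measure.real, measure_univ, ENNReal.toReal_one, one_smul, smul_eq_mul]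
  nlinarith

lemma prod_gfn_integral (L : ℕ) :
    ∀ r, ∫ ω, ∏ i ∈ Finset.range r, gfn X A (i*L) L ω ∂P ≤ (3/4)^r := by
  intro r
  induction r with
  | zero => simp
  | succ r ih =>
    have hsplit : ∫ ω, ∏ i ∈ Finset.range (r+1), gfn X A (i*L) L ω ∂P
        = (∫ ω, ∏ i ∈ Finset.range r, gfn X A (i*L) L ω ∂P) * ∫ ω, gfn X A (r*L) L ω ∂P := by
      simp_rw [Finset.prod_range_succ]
      exact IndepFun.integral_mul_eq_mul_integral (indep_prod_gfn hXmeas hindep A L r)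
        (integrable_prod_gfn hXmeas A L r).aestronglyMeasurable
        (integrable_gfn hXmeas A (r*L) L).aestronglyMeasurable
    rw [hsplit]
    have h1 : 0 ≤ ∫ ω, ∏ i ∈ Finset.range r, gfn X A (i*L) L ω ∂P :=
      integral_nonneg (fun ω => Finset.prod_nonneg (fun i _ => gfn_nonneg A (i*L) L ω))
    have h2 : 0 ≤ ∫ ω, gfn X A (r*L) L ω ∂P := integral_nonneg (fun ω => gfn_nonneg A (r*L) L ω)
    calc (∫ ω, ∏ i ∈ Finset.range r, gfn X A (i*L) L ω ∂P) * ∫ ω, gfn X A (r*L) L ω ∂P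
        ≤ (3/4)^r * (3/4) :=
          mul_le_mul ih (integral_gfn_le hXmeas hindep hq (r*L) L) h2 (by positivity)
      _ = (3/4)^(r+1) := by ring

lemma bad_prob (L r t : ℕ) :
    P {ω | ((2:ℝ)⁻¹)^t ≤ ∏ i ∈ Finset.range r, gfn X A (i*L) L ω}
      ≤ ENNReal.ofReal ((3/4)^r * 2^t) := by
  have hmark := mul_meas_ge_le_integral_of_nonneg (μ := P)
    (f := fun ω => ∏ i ∈ Finset.range r, gfn X A (i*L) L ω)
    (Filter.Eventually.of_forall
      (fun ω => Finset.prod_nonneg (fun i _ => gfn_nonneg A (i*L) L ω)))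
    (integrable_prod_gfn hXmeas A L r) (((2:ℝ)⁻¹)^t)
  have hle := le_trans hmark (prod_gfn_integral hXmeas hindep hq L r)
  have h2t : (0:ℝ) < ((2:ℝ)⁻¹)^t := by positivity
  set s := {ω | ((2:ℝ)⁻¹)^t ≤ ∏ i ∈ Finset.range r, gfn X A (i*L) L ω}
  have h1 : (P s).toReal ≤ (3/4)^r * 2^t := by
    rw [← le_div_iff₀' h2t] at hle
    calc (P s).toReal ≤ (3/4)^r / ((2:ℝ)⁻¹)^t := hle
      _ = (3/4)^r * 2^t := by
        rw [inv_pow, div_inv_eq_mul]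
  calc P s = ENNReal.ofReal ((P s).toReal) := (ENNReal.ofReal_toReal (measure_ne_top P _)).symm
    _ ≤ ENNReal.ofReal ((3/4)^r * 2^t) := ENNReal.ofReal_le_ofReal h1

end ProbIndep

section Moments
variable {Ω : Type*} [MeasurableSpace Ω] {P : Measure Ω} [IsProbabilityMeasure P]
variable {X : ℕ → Ω → ℤ}
variable {J : Type*} [Countable J] {ℓ : J → ℤ} {p : J → ℝ}
variable (hp : ∀ j, 0 < p j)
  (hXmeas : ∀ k, Measurable (X k))
  (hdist : ∀ k, Measure.map (X k) P
      = Measure.sum fun j => ENNReal.ofReal (p j) • Measure.dirac (ℓ j))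
  (hcentered : ∑' j, p j * (ℓ j : ℝ) = 0)
  (hmom2 : Summable fun j => p j * (ℓ j : ℝ) ^ 2)

include hp hXmeas hdist hmom2

lemma step_memL2 (k : ℕ) : MemLp (fun ω => (X k ω : ℝ)) 2 P := by
  have hmeas : Measurable fun ω => (X k ω : ℝ) := (measurable_of_countable _).comp (hXmeas k)
  rw [memLp_two_iff_integrable_sq hmeas.aestronglyMeasurable]
  refine ⟨(hmeas.pow_const 2).aestronglyMeasurable, ?_⟩
  rw [hasFiniteIntegral_iff_norm]
  have heq : ∫⁻ ω, ENNReal.ofReal ‖(X k ω : ℝ)^2‖ ∂P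
      = ∫⁻ z : ℤ, ENNReal.ofReal ((z:ℝ)^2) ∂(Measure.map (X k) P) := by
    rw [lintegral_map (measurable_of_countable _) (hXmeas k)]
    congr 1
    funext ω
    rw [Real.norm_eq_abs, abs_of_nonneg (by positivity)]
  rw [heq, hdist k, lintegral_sum_measure]
  have hterm : ∀ j, ∫⁻ z : ℤ, ENNReal.ofReal ((z:ℝ)^2)
      ∂(ENNReal.ofReal (p j) • Measure.dirac (ℓ j)) = ENNReal.ofReal (p j * (ℓ j:ℝ)^2) := by
    intro j
    rw [lintegral_smul_measure, lintegral_dirac' _ (measurable_of_countable _), smul_eq_mul,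
      ← ENNReal.ofReal_mul (hp j).le]
  simp_rw [hterm]
  rw [← ENNReal.ofReal_tsum_of_nonneg (fun j => mul_nonneg (hp j).le (by positivity)) hmom2]
  exact ENNReal.ofReal_lt_top

lemma step_integrable_sq (k : ℕ) : Integrable (fun ω => (X k ω : ℝ)^2) P := by
  have hmeas : Measurable fun ω => (X k ω : ℝ) := (measurable_of_countable _).comp (hXmeas k)
  exact (memLp_two_iff_integrable_sq hmeas.aestronglyMeasurable).1
    (step_memL2 hp hXmeas hdist hmom2 k)

lemma step_integrable (k : ℕ) : Integrable (fun ω => (X k ω : ℝ)) P :=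
  (step_memL2 hp hXmeas hdist hmom2 k).integrable one_le_two

lemma step_sq_int (k : ℕ) : ∫ ω, (X k ω : ℝ)^2 ∂P = ∑' j, p j * (ℓ j : ℝ)^2 := by
  have hasm : AEStronglyMeasurable (fun z : ℤ => (z:ℝ)^2) (Measure.map (X k) P) :=
    (measurable_of_countable _).aestronglyMeasurable
  have hmap : ∫ ω, (X k ω : ℝ)^2 ∂P = ∫ z : ℤ, (z:ℝ)^2 ∂(Measure.map (X k) P) :=
    (integral_map (hXmeas k).aemeasurable hasm).symm
  have hIntMap : Integrable (fun z : ℤ => (z:ℝ)^2) (Measure.map (X k) P) :=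
    (integrable_map_measure hasm (hXmeas k).aemeasurable).2
      (step_integrable_sq hp hXmeas hdist hmom2 k)
  rw [hdist k] at hIntMap
  rw [hmap, hdist k, integral_sum_measure hIntMap]
  apply tsum_congr
  intro j
  rw [integral_smul_measure, integral_dirac]
  rw [ENNReal.toReal_ofReal (hp j).le]
  simp

include hcentered in
lemma step_mean (k : ℕ) : ∫ ω, (X k ω : ℝ) ∂P = 0 := by
  have hasm : AEStronglyMeasurable (fun z : ℤ => (z:ℝ)) (Measure.map (X k) P) :=
    (measurable_of_countable _).aestronglyMeasurable
  have hmap : ∫ ω, (X k ω : ℝ) ∂P = ∫ z : ℤ, (z:ℝ) ∂(Measure.map (X k) P) :=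
    (integral_map (hXmeas k).aemeasurable hasm).symm
  have hIntMap : Integrable (fun z : ℤ => (z:ℝ)) (Measure.map (X k) P) :=
    (integrable_map_measure hasm (hXmeas k).aemeasurable).2
      (step_integrable hp hXmeas hdist hmom2 k)
  rw [hdist k] at hIntMap
  rw [hmap, hdist k, integral_sum_measure hIntMap, ← hcentered]
  apply tsum_congr
  intro j
  rw [integral_smul_measure, integral_dirac]
  rw [ENNReal.toReal_ofReal (hp j).le]
  simp

include hcentered in
lemma step_var (k : ℕ) : variance (fun ω => (X k ω : ℝ)) P = ∑' j, p j * (ℓ j : ℝ)^2 := by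
  rw [variance_eq_sub (step_memL2 hp hXmeas hdist hmom2 k)]
  rw [step_mean hp hXmeas hdist hcentered hmom2 k]
  have h5 : ∫ ω, ((fun ω => (X k ω : ℝ)) ω)^2 ∂P = ∑' j, p j * (ℓ j : ℝ)^2 :=
    step_sq_int hp hXmeas hdist hmom2 k
  simp only [Pi.pow_apply]
  simp only [Pi.pow_apply] at h5
  rw [h5]
  ring

variable (hindep : iIndepFun X P)

omit hp hXmeas hdist hmom2 in
lemma Dfun_cast (a k : ℕ) : (fun ω => (Dfun X a k ω : ℝ))
    = ∑ j ∈ Finset.Ico a (a+k), (fun ω => (X j ω : ℝ)) := by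
  funext ω
  rw [Finset.sum_apply]
  unfold Dfun DfunS
  push_cast
  rfl

lemma Dfun_memL2 (a k : ℕ) : MemLp (fun ω => (Dfun X a k ω : ℝ)) 2 P := by
  rw [Dfun_cast]
  exact memLp_finset_sum' _ (fun j _ => step_memL2 hp hXmeas hdist hmom2 j)

include hcentered in
lemma Dfun_mean (a k : ℕ) : ∫ ω, (Dfun X a k ω : ℝ) ∂P = 0 := by
  rw [Dfun_cast]
  have : ∫ ω, (∑ j ∈ Finset.Ico a (a+k), (fun ω => (X j ω : ℝ))) ω ∂P
      = ∑ j ∈ Finset.Ico a (a+k), ∫ ω, (X j ω : ℝ) ∂P := by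
    simp_rw [Finset.sum_apply]
    exact integral_finset_sum _ (fun j _ => step_integrable hp hXmeas hdist hmom2 j)
  rw [this]
  exact Finset.sum_eq_zero (fun j _ => step_mean hp hXmeas hdist hcentered hmom2 j)

include hcentered hindep in
lemma Dfun_var (a k : ℕ) :
    variance (fun ω => (Dfun X a k ω : ℝ)) P ≤ k * (∑' j, p j * (ℓ j : ℝ)^2) := by
  rw [Dfun_cast]
  have hpair : Set.Pairwise ↑(Finset.Ico a (a+k))
      (fun i j => IndepFun (fun ω => (X i ω : ℝ)) (fun ω => (X j ω : ℝ)) P) := by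
    intro i _ j _ hij
    exact (hindep.indepFun hij).comp (measurable_of_countable _) (measurable_of_countable _)
  rw [IndepFun.variance_sum (fun j _ => step_memL2 hp hXmeas hdist hmom2 j) hpair]
  have : ∀ j ∈ Finset.Ico a (a+k), variance (fun ω => (X j ω : ℝ)) P
      = ∑' j, p j * (ℓ j : ℝ)^2 := fun j _ => step_var hp hXmeas hdist hcentered hmom2 j
  rw [Finset.sum_congr rfl this, Finset.sum_const, Nat.card_Ico]
  simp [nsmul_eq_mul]

end Moments


def sW (m : ℕ) : ℕ := 2*(Nat.log 2 m + 1)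
def rW (m : ℕ) : ℕ := 8 * sW m
def LW (m : ℕ) : ℕ := 2^m / rW m

lemma sqrt2_le : Real.sqrt 2 ≤ 1.5 := by
  nlinarith [Real.sq_sqrt (by norm_num : (0:ℝ) ≤ 2), Real.sqrt_nonneg 2]

lemma cube_compare {x y : ℝ} (hy : 0 < y) (hx0 : 0 ≤ x) (hxy : x ≤ 2*y) :
    x * Real.sqrt x ≤ 3*(y*Real.sqrt y) := by
  have h6 : Real.sqrt x ≤ Real.sqrt 2 * Real.sqrt y := by
    rw [← Real.sqrt_mul (by norm_num)]
    exact Real.sqrt_le_sqrt hxy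
  have h7 : Real.sqrt x ≤ 1.5 * Real.sqrt y := by
    nlinarith [Real.sqrt_nonneg y, sqrt2_le]
  nlinarith [Real.sqrt_nonneg y, Real.sqrt_nonneg x]

lemma sqrt_compare {s LL : ℝ} (hs : 0 ≤ s) (h : s ≤ 10.24*LL) :
    Real.sqrt s ≤ 3.2*Real.sqrt LL := by
  calc Real.sqrt s ≤ Real.sqrt (10.24*LL) := Real.sqrt_le_sqrt h
    _ = Real.sqrt 10.24 * Real.sqrt LL := Real.sqrt_mul (by norm_num) _
    _ = 3.2 * Real.sqrt LL := by
        rw [show (10.24:ℝ) = 3.2^2 by norm_num, Real.sqrt_sq (by norm_num)]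

lemma div16_le {y s L : ℝ} (hs : 0 < s) (h1 : y < 8*s*(L+1)) (h2 : 16*s ≤ y) :
    y/(16*s) ≤ L := by
  rw [div_le_iff₀ (by positivity)]
  nlinarith

lemma xx_eq {y s w sy : ℝ} (hs : s ≠ 0) (hw : w ≠ 0) :
    (y/(16*s))*(sy/(4*w)) = y*sy/(64*s*w) := by
  rw [div_mul_div_comm]
  congr 1
  ring

lemma e2_eq {y sy s w A : ℝ} (hs : s ≠ 0) (hw : w ≠ 0) (hA : A ≠ 0) :
    s * ((y*sy/(64*s*w))/(20*A)) = y*sy/(1280*A*w) := by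
  field_simp
  ring

lemma lhs_eq {A n sn u : ℝ} (hu : u ≠ 0) (hA : A ≠ 0) :
    (1/(50000*A))*(n*sn)*u⁻¹ = n*sn/(50000*A*u) := by
  field_simp

lemma cross_bound {A u w a b : ℝ} (hA : 0 < A) (hu : 0 < u) (hw : 0 < w)
    (ha : 0 ≤ a) (hb : 0 ≤ b) (hab : a ≤ 3*b) (hwu : w ≤ 3.2*u) :
    a/(50000*A*u) ≤ b/(1280*A*w) := by
  rw [div_le_div_iff₀ (by positivity) (by positivity)]
  have hprod : a * w ≤ (3*b) * (3.2*u) := mul_le_mul hab hwu hw.le (by positivity)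
  nlinarith [mul_le_mul_of_nonneg_left hprod hA.le,
    mul_nonneg (mul_nonneg hA.le hb) hu.le]

lemma loglog_pos (n : ℕ) (hn : 3 ≤ n) : 0 < Real.log (Real.log n) := by
  have h3 : (3:ℝ) ≤ (n:ℝ) := by exact_mod_cast hn
  have he : Real.exp 1 < (n:ℝ) := by
    have := Real.exp_one_lt_d9
    linarith
  have h1 : 1 < Real.log n := by
    calc (1:ℝ) = Real.log (Real.exp 1) := (Real.log_exp 1).symm
      _ < Real.log n := Real.log_lt_log (Real.exp_pos 1) he
  calc (0:ℝ) = Real.log 1 := Real.log_one.symm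
    _ < Real.log (Real.log n) := Real.log_lt_log one_pos h1

lemma nat_aux1 : ∀ m : ℕ, 12 ≤ m → 32*(m+1) ≤ 2^m := by
  intro m hm
  induction m with
  | zero => omega
  | succ n ih =>
    rcases Nat.lt_or_ge n 12 with h | h
    · interval_cases n <;> simp_all
    · have h1 := ih h
      have h2 : 32 ≤ 2^n := by
        calc 32 ≤ 32*(n+1) := by omega
          _ ≤ 2^n := h1
      calc 32*(n+1+1) = 32*(n+1) + 32 := by ring
        _ ≤ 2^n + 2^n := by omega
        _ = 2^(n+1) := by ring

lemma nat_aux2 (m : ℕ) (hm : 12 ≤ m) : 32*(Nat.log 2 m + 1) ≤ 2^m := by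
  have h1 : Nat.log 2 m ≤ m := Nat.log_le_self 2 m
  calc 32*(Nat.log 2 m + 1) ≤ 32*(m+1) := by omega
    _ ≤ 2^m := nat_aux1 m hm

lemma chern_aux (s : ℕ) : ((3:ℝ)/4)^(8*s) * 2^s ≤ (1/4)^s := by
  have h1 : ((3:ℝ)/4)^(8*s) = (((3:ℝ)/4)^8)^s := by rw [pow_mul]
  rw [h1, ← mul_pow]
  apply pow_le_pow_left₀ (by positivity)
  norm_num

lemma pow_bound (m : ℕ) : ((1:ℝ)/4)^(2*(Nat.log 2 m + 1)) ≤ (((m:ℝ)+1)⁻¹)^3 := by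
  set lg := Nat.log 2 m
  have h0 : (m:ℝ) + 1 ≤ 2^(lg+1) := by
    have := Nat.lt_pow_succ_log_self (by norm_num : 1 < 2) m
    exact_mod_cast Nat.succ_le_of_lt this
  have hb : (0:ℝ) < ((m:ℝ)+1)⁻¹ := by positivity
  have ha : ((1:ℝ)/2)^(lg+1) ≤ ((m:ℝ)+1)⁻¹ := by
    rw [div_pow, one_pow, div_le_iff₀ (by positivity), inv_mul_eq_div, le_div_iff₀ (by positivity)]
    linarith
  have h2 : ((1:ℝ)/4)^(2*(lg+1)) = (((1:ℝ)/2)^(lg+1))^4 := by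
    rw [show (1/4:ℝ) = (1/2)^2 by norm_num, ← pow_mul, ← pow_mul]
    congr 1
    ring
  rw [h2]
  calc (((1:ℝ)/2)^(lg+1))^4 ≤ (((m:ℝ)+1)⁻¹)^4 := pow_le_pow_left₀ (by positivity) ha 4
    _ ≤ (((m:ℝ)+1)⁻¹)^3 * 1 := by
        rw [pow_succ]
        apply mul_le_mul_of_nonneg_left _ (by positivity)
        rw [inv_le_one_iff₀]
        right; linarith [Nat.cast_nonneg (α := ℝ) m]
    _ = (((m:ℝ)+1)⁻¹)^3 := by ring

lemma summable_bound : Summable (fun m : ℕ => (((m:ℝ)+1)⁻¹)^3) := by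
  have h1 : Summable (fun n : ℕ => 1/(n:ℝ)^3) :=
    Real.summable_one_div_nat_pow.2 (by norm_num)
  have h2 := (summable_nat_add_iff 1).2 h1
  apply h2.congr
  intro n
  push_cast
  rw [one_div, inv_pow]

lemma mul_sqrt_mono {a b : ℝ} (ha : 0 ≤ a) (h : a ≤ b) : a * Real.sqrt a ≤ b * Real.sqrt b :=
  mul_le_mul h (Real.sqrt_le_sqrt h) (Real.sqrt_nonneg a) (le_trans ha h)

lemma rpow_32 {x : ℝ} (hx : 0 < x) : x ^ ((3:ℝ)/2) = x * Real.sqrt x := by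
  rw [show (3:ℝ)/2 = 1 + 1/2 by norm_num, Real.rpow_add hx, Real.rpow_one,
    Real.sqrt_eq_rpow]

lemma rpow_neg_half {y : ℝ} (hy : 0 ≤ y) : y ^ (-(1:ℝ)/2) = (Real.sqrt y)⁻¹ := by
  rw [neg_div, Real.rpow_neg hy, Real.sqrt_eq_rpow]

lemma log_log_ge (m n : ℕ) (hm : 3 ≤ m) (hn : 2^m ≤ n) :
    (1/2:ℝ) * Real.log m ≤ Real.log (Real.log n) ∧ (0:ℝ) < Real.log (Real.log n) := by
  have hm1 : (1:ℝ) ≤ Real.log m := by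
    have h3 : (Real.exp 1) ≤ (m:ℝ) := by
      have := Real.exp_one_lt_d9
      have hm3 : (3:ℝ) ≤ (m:ℝ) := by exact_mod_cast hm
      linarith
    calc (1:ℝ) = Real.log (Real.exp 1) := (Real.log_exp 1).symm
      _ ≤ Real.log m := Real.log_le_log (Real.exp_pos 1) h3
  have hl2 : (0.6931471803:ℝ) < Real.log 2 := Real.log_two_gt_d9
  have hl2' : Real.log 2 < 1 := by
    have := Real.log_two_lt_d9
    linarith
  -- log n ≥ m * log 2
  have hn0 : (0:ℝ) < (n:ℝ) := by
    have : (0:ℕ) < n := lt_of_lt_of_le (Nat.pow_pos (n := m) (by norm_num)) hn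
    exact_mod_cast this
  have hlogn : (m:ℝ) * Real.log 2 ≤ Real.log n := by
    calc (m:ℝ) * Real.log 2 = Real.log ((2:ℝ)^m) := by rw [Real.log_pow]
      _ ≤ Real.log n := Real.log_le_log (by positivity) (by exact_mod_cast hn)
  have hmpos : (0:ℝ) < (m:ℝ) := by exact_mod_cast lt_of_lt_of_le (by norm_num) hm
  have hmlog2 : (0:ℝ) < (m:ℝ) * Real.log 2 := by positivity
  -- log log n ≥ log (m log 2) = log m + log log 2
  have h4 : Real.log ((m:ℝ) * Real.log 2) ≤ Real.log (Real.log n) :=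
    Real.log_le_log hmlog2 hlogn
  have h5 : Real.log ((m:ℝ) * Real.log 2) = Real.log m + Real.log (Real.log 2) :=
    Real.log_mul (ne_of_gt hmpos) (by linarith)
  -- log log 2 ≥ -0.45
  have h6 : (-0.45:ℝ) ≤ Real.log (Real.log 2) := by
    have hx : Real.log (Real.log 2)  = - Real.log (Real.log 2)⁻¹ := by
      rw [Real.log_inv]; ring
    have h7 : Real.log (Real.log 2)⁻¹ ≤ (Real.log 2)⁻¹ - 1 :=
      Real.log_le_sub_one_of_pos (by positivity)
    have h8 : (Real.log 2)⁻¹ ≤ 1.45 := by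
      rw [inv_le_comm₀ (by linarith) (by norm_num)]
      linarith
    rw [hx]
    linarith
  constructor
  · calc (1/2:ℝ) * Real.log m = Real.log m - (1/2) * Real.log m := by ring
      _ ≤ Real.log m - 0.45 := by nlinarith
      _ ≤ Real.log m + Real.log (Real.log 2) := by linarith
      _ = Real.log ((m:ℝ) * Real.log 2) := h5.symm
      _ ≤ Real.log (Real.log n) := h4
  · have : (0:ℝ) < 1/2 * Real.log m := by linarith
    calc (0:ℝ) < 1/2 * Real.log m := this
      _ ≤ Real.log (Real.log n) := by
        calc (1/2:ℝ) * Real.log m ≤ Real.log m - 0.45 := by nlinarith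
          _ ≤ Real.log m + Real.log (Real.log 2) := by linarith
          _ = Real.log ((m:ℝ) * Real.log 2) := h5.symm
          _ ≤ Real.log (Real.log n) := h4

lemma s_le_log (m : ℕ) (hm : 12 ≤ m) :
    (2*(Nat.log 2 m + 1) : ℝ) ≤ 5 * Real.log m := by
  set lg := Nat.log 2 m
  have hm1 : (1:ℝ) ≤ Real.log m := by
    have h3 : (Real.exp 1) ≤ (m:ℝ) := by
      have := Real.exp_one_lt_d9
      have hm3 : (12:ℝ) ≤ (m:ℝ) := by exact_mod_cast hm
      linarith
    calc (1:ℝ) = Real.log (Real.exp 1) := (Real.log_exp 1).symm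
      _ ≤ Real.log m := Real.log_le_log (Real.exp_pos 1) h3
  have hl2 : (0.6931471803:ℝ) < Real.log 2 := Real.log_two_gt_d9
  have hpow : ((2:ℝ))^lg ≤ (m:ℝ) := by
    have := Nat.pow_log_le_self 2 (by omega : m ≠ 0)
    exact_mod_cast this
  have hlg : (lg:ℝ) * Real.log 2 ≤ Real.log m := by
    calc (lg:ℝ) * Real.log 2 = Real.log ((2:ℝ)^lg) := by rw [Real.log_pow]
      _ ≤ Real.log m := Real.log_le_log (by positivity) hpow
  have hlgnn : (0:ℝ) ≤ (lg:ℝ) := Nat.cast_nonneg lg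
  push_cast
  nlinarith

end SelfIntAux

open SelfIntAux in
/-- **Lower bound for self-intersections of a one-dimensional walk.**
If `(Z_n)` is a centered random walk on `ℤ` with finite second moment, then for a.e. `ω`
there is `C(ω) > 0` with `V_n(ω) ≥ C(ω) n^{3/2} (log log n)^{-1/2}` for all `n ≥ 3`. -/
theorem selfIntersections_lower_bound_dim_one
    {Ω : Type*} [MeasurableSpace Ω] (P : Measure Ω) [IsProbabilityMeasure P]
    {J : Type*} [Countable J] (ℓ : J → ℤ) (p : J → ℝ)
    (hp : ∀ j, 0 < p j) (hp1 : HasSum p 1)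
    (X : ℕ → Ω → ℤ) (hXmeas : ∀ k, Measurable (X k))
    (hindep : iIndepFun X P)
    (hdist : ∀ k, Measure.map (X k) P
      = Measure.sum fun j => ENNReal.ofReal (p j) • Measure.dirac (ℓ j))
    (hcentered : ∑' j, p j * (ℓ j : ℝ) = 0)
    (hmom2 : Summable fun j => p j * (ℓ j : ℝ) ^ 2) :
    ∀ᵐ ω ∂P, ∃ C > (0:ℝ), ∀ n : ℕ, 3 ≤ n →
      C * (n : ℝ) ^ ((3:ℝ)/2) * (Real.log (Real.log n)) ^ (-(1:ℝ)/2)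
        ≤ (selfIntZ X n ω : ℝ) := by
  classical
  have hv0 : (0:ℝ) ≤ ∑' j, p j * (ℓ j : ℝ)^2 :=
    tsum_nonneg (fun j => mul_nonneg (hp j).le (by positivity))
  set v : ℝ := ∑' j, p j * (ℓ j : ℝ)^2 with hvdef
  set A : ℝ := 2 * Real.sqrt v + 1 with hAdef
  have hA1 : (1:ℝ) ≤ A := by
    have := Real.sqrt_nonneg v
    rw [hAdef]; linarith
  have hA4 : 4*v ≤ A^2 := by
    have h1 := Real.sq_sqrt hv0
    have h2 := Real.sqrt_nonneg v
    rw [hAdef]; nlinarith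
  have hApos : (0:ℝ) < A := by linarith
  -- moment facts for window sums
  have hmem : ∀ a k : ℕ, MemLp (fun ω => (Dfun X a k ω : ℝ)) 2 P :=
    fun a k => Dfun_memL2 hp hXmeas hdist hmom2 a k
  have hzero : ∀ a k : ℕ, ∫ ω, (Dfun X a k ω : ℝ) ∂P = 0 :=
    fun a k => Dfun_mean hp hXmeas hdist hcentered hmom2 a k
  have hvar : ∀ a k : ℕ, variance (fun ω => (Dfun X a k ω : ℝ)) P ≤ k * v :=
    fun a k => Dfun_var hp hXmeas hdist hcentered hmom2 hindep a k
  have hq : ∀ a L : ℕ, (1/2:ℝ) ≤ (P {ω | (L:ℝ)/2 ≤ (Tcnt X A a L ω : ℝ)}).toReal :=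
    fun a L => Eset_prob hXmeas hv0 hA4 hA1 hmem hzero hvar a L
  -- window sizes
  set bad : ℕ → Set Ω := fun m =>
    {ω | ((2:ℝ)⁻¹)^(sW m) ≤ ∏ i ∈ Finset.range (rW m), gfn X A (i * LW m) (LW m) ω} with hbad
  have hbadP : ∀ m, P (bad m) ≤ ENNReal.ofReal ((((m:ℝ)+1)⁻¹)^3) := by
    intro m
    refine le_trans (bad_prob hXmeas hindep hq (LW m) (rW m) (sW m))
      (ENNReal.ofReal_le_ofReal ?_)
    calc ((3:ℝ)/4)^(rW m) * 2^(sW m) = ((3:ℝ)/4)^(8 * sW m) * 2^(sW m) := by rw [rW]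
      _ ≤ (1/4)^(sW m) := chern_aux (sW m)
      _ ≤ (((m:ℝ)+1)⁻¹)^3 := by rw [sW]; exact pow_bound m
  have hsum : ∑' m, P (bad m) ≠ ⊤ := by
    apply ne_top_of_le_ne_top _ (ENNReal.tsum_le_tsum hbadP)
    rw [← ENNReal.ofReal_tsum_of_nonneg (fun m => by positivity) summable_bound]
    exact ENNReal.ofReal_ne_top
  filter_upwards [MeasureTheory.ae_eventually_notMem hsum] with ω hω
  rw [Filter.eventually_atTop] at hω
  obtain ⟨m₀, hm₀⟩ := hω
  set M : ℕ := max m₀ 12 with hMdef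
  -- the dyadic-scale lower bound
  have main : ∀ m, M ≤ m → ∀ n : ℕ, 2^m ≤ n → n < 2^(m+1) →
      (1/(50000*A)) * (n:ℝ) ^ ((3:ℝ)/2) * (Real.log (Real.log n)) ^ (-(1:ℝ)/2)
        ≤ (selfIntZ X n ω : ℝ) := by
    intro m hMm n h2m h2m'
    have hm12 : 12 ≤ m := le_trans (le_max_right _ _) hMm
    have hm0 : m₀ ≤ m := le_trans (le_max_left _ _) hMm
    have hnot : ω ∉ bad m := hm₀ m hm0
    have hn3' : 3 ≤ n := by
      have : 2^12 ≤ 2^m := Nat.pow_le_pow_right (by norm_num) hm12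
      omega
    have hn0r : (0:ℝ) < n := by
      have : (0:ℕ) < n := by omega
      exact_mod_cast this
    have hLL := loglog_pos n hn3'
    have hLLhalf := (log_log_ge m n (by omega) h2m).1
    -- nat facts about window sizes
    have h2r : 2 * rW m ≤ 2^m := by
      have := nat_aux2 m hm12
      simp only [rW, sW]
      omega
    have hr0 : 0 < rW m := by simp only [rW, sW]; omega
    have hrL : rW m * LW m ≤ 2^m := by
      simp only [LW]
      calc rW m * (2^m / rW m) = (2^m / rW m) * rW m := mul_comm _ _
        _ ≤ 2^m := Nat.div_mul_le_self _ _
    have hL1 : 1 ≤ LW m := by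
      simp only [LW]
      rw [Nat.one_le_div_iff hr0]
      omega
    -- many windows succeed
    set filt := (Finset.range (rW m)).filter
      (fun i => ((LW m:ℝ))/2 ≤ (Tcnt X A (i * LW m) (LW m) ω : ℝ)) with hfilt
    have hB : sW m < filt.card := by
      by_contra hcon
      push_neg at hcon
      apply hnot
      show ((2:ℝ)⁻¹)^(sW m) ≤ _
      rw [gfn_prod_eq_pow]
      have h1 : ((1:ℝ)/2) ^ (sW m) ≤ ((1:ℝ)/2) ^ filt.card :=
        pow_le_pow_of_le_one (by norm_num) (by norm_num) hcon
      rw [hfilt] at h1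
      norm_num at h1 ⊢
      exact h1
    -- pathwise window bounds
    have hwin : ∀ i ∈ filt, ((LW m:ℝ)) * Real.sqrt (LW m) / (20*A)
        ≤ ((Wfin X (i * LW m) (LW m) ω).card : ℝ) := by
      intro i hi
      exact window_lower X ω (i * LW m) (LW m) A hL1 hA1 (Finset.mem_filter.1 hi).2
    have hcwpos : (0:ℝ) ≤ (LW m:ℝ) * Real.sqrt (LW m) / (20*A) := by positivity
    have hsum1 : (sW m : ℝ) * ((LW m:ℝ) * Real.sqrt (LW m) / (20*A))
        ≤ (selfIntZ X (2^m) ω : ℝ) := by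
      have hcard : (sW m:ℝ) ≤ (filt.card : ℝ) := by exact_mod_cast le_of_lt hB
      calc (sW m : ℝ) * ((LW m:ℝ) * Real.sqrt (LW m) / (20*A))
          ≤ (filt.card:ℝ) * ((LW m:ℝ) * Real.sqrt (LW m) / (20*A)) :=
            mul_le_mul_of_nonneg_right hcard hcwpos
        _ = ∑ _i ∈ filt, ((LW m:ℝ) * Real.sqrt (LW m) / (20*A)) := by
            rw [Finset.sum_const, nsmul_eq_mul]
        _ ≤ ∑ i ∈ filt, ((Wfin X (i*LW m) (LW m) ω).card : ℝ) := Finset.sum_le_sum hwin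
        _ ≤ ∑ i ∈ Finset.range (rW m), ((Wfin X (i*LW m) (LW m) ω).card : ℝ) :=
            Finset.sum_le_sum_of_subset_of_nonneg (Finset.filter_subset _ _)
              (fun i _ _ => Nat.cast_nonneg _)
        _ = ((∑ i ∈ Finset.range (rW m), (Wfin X (i*LW m) (LW m) ω).card : ℕ) : ℝ) :=
            (Nat.cast_sum _ _).symm
        _ ≤ (selfIntZ X (2^m) ω : ℝ) :=
            Nat.cast_le.2 (sum_windows X ω (rW m) (LW m) (2^m) hrL)
    -- real arithmetic
    set y : ℝ := ((2^m : ℕ) : ℝ) with hy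
    have hypos : (0:ℝ) < y := by
      rw [hy]
      exact_mod_cast pow_pos (show (0:ℕ) < 2 by norm_num) m
    have hyn : y ≤ (n:ℝ) := by rw [hy]; exact_mod_cast h2m
    have hn2y : (n:ℝ) ≤ 2*y := by
      rw [hy]
      have : (n:ℝ) ≤ ((2^(m+1) : ℕ) : ℝ) := by exact_mod_cast le_of_lt h2m'
      calc (n:ℝ) ≤ ((2^(m+1) : ℕ) : ℝ) := this
        _ = 2 * ((2^m : ℕ):ℝ) := by push_cast; ring
    set sr : ℝ := ((sW m : ℕ) : ℝ) with hsr
    have hsr2 : (2:ℝ) ≤ sr := by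
      rw [hsr]
      simp only [sW]
      push_cast
      have : (0:ℝ) ≤ (Nat.log 2 m : ℝ) := Nat.cast_nonneg _
      linarith
    have hsrpos : (0:ℝ) < sr := by linarith
    set Lr : ℝ := ((LW m : ℕ) : ℝ) with hLr
    have hLr1 : (1:ℝ) ≤ Lr := by rw [hLr]; exact_mod_cast hL1
    have hrreq : ((rW m : ℕ) : ℝ) = 8 * sr := by rw [hsr]; simp only [rW]; push_cast; ring
    have hLrlow : y/(16*sr) ≤ Lr := by
      have hmod : 2^m < rW m * LW m + rW m := by
        have h1 := Nat.div_add_mod (2^m) (rW m)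
        have h2 := Nat.mod_lt (2^m) hr0
        simp only [LW]
        omega
      have hmod' : 2^m < rW m * (LW m + 1) := by
        have : rW m * (LW m + 1) = rW m * LW m + rW m := by ring
        omega
      have hc1 : y < 8*sr * (Lr + 1) := by
        have h9 : y < ((rW m : ℕ):ℝ) * (Lr + 1) := by
          rw [hy, hLr]
          exact_mod_cast hmod'
        rw [hrreq] at h9
        linarith only [h9]
      have hc2 : 16*sr ≤ y := by
        have h9 : 2*((rW m:ℕ):ℝ) ≤ y := by
          rw [hy]
          exact_mod_cast h2r
        rw [hrreq] at h9
        linarith only [h9]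
      exact div16_le hsrpos hc1 hc2
    -- sqrt abbreviations
    set u : ℝ := Real.sqrt (Real.log (Real.log n)) with hu
    have hupos : (0:ℝ) < u := Real.sqrt_pos.2 hLL
    set w : ℝ := Real.sqrt sr with hw
    have hwpos : (0:ℝ) < w := Real.sqrt_pos.2 hsrpos
    have husq : u * u = Real.log (Real.log n) := Real.mul_self_sqrt hLL.le
    have hwsq : w * w = sr := Real.mul_self_sqrt hsrpos.le
    have hw32 : w ≤ 3.2 * u := by
      have h5 : sr ≤ 5 * Real.log m := by
        rw [hsr]
        simp only [sW]
        exact_mod_cast s_le_log m hm12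
      have hs10 : sr ≤ 10.24 * Real.log (Real.log n) := by
        linarith only [h5, hLLhalf, hLL]
      rw [hw, hu]
      exact sqrt_compare hsrpos.le hs10
    have hxsqrt : Real.sqrt (y/(16*sr)) = Real.sqrt y / (4*w) := by
      rw [Real.sqrt_div hypos.le, Real.sqrt_mul (by norm_num : (0:ℝ) ≤ 16), hw,
        show Real.sqrt 16 = 4 by
          rw [show (16:ℝ) = 4^2 by norm_num, Real.sqrt_sq (by norm_num)]]
    have hsy : (0:ℝ) < Real.sqrt y := Real.sqrt_pos.2 hypos
    have hsn : (0:ℝ) ≤ Real.sqrt n := Real.sqrt_nonneg _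
    have hyy : (n:ℝ) * Real.sqrt n ≤ 3 * (y * Real.sqrt y) :=
      cube_compare hypos (by positivity) hn2y
    -- the central comparison
    have hstep : (1/(50000*A)) * ((n:ℝ)*Real.sqrt n) * u⁻¹
        ≤ sr * (Lr * Real.sqrt Lr / (20*A)) := by
      have hxx : (y/(16*sr)) * Real.sqrt (y/(16*sr)) ≤ Lr * Real.sqrt Lr :=
        mul_sqrt_mono (by positivity) hLrlow
      have hxxeq : (y/(16*sr)) * Real.sqrt (y/(16*sr)) = y*Real.sqrt y/(64*sr*w) := by
        rw [hxsqrt]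
        exact xx_eq (ne_of_gt hsrpos) (ne_of_gt hwpos)
      have hR : y*Real.sqrt y/(1280*A*w) ≤ sr * (Lr*Real.sqrt Lr/(20*A)) := by
        have e2 : sr * ((y*Real.sqrt y/(64*sr*w))/(20*A)) = y*Real.sqrt y/(1280*A*w) :=
          e2_eq (ne_of_gt hsrpos) (ne_of_gt hwpos) (ne_of_gt hApos)
        calc y*Real.sqrt y/(1280*A*w) = sr * ((y*Real.sqrt y/(64*sr*w))/(20*A)) := e2.symm
          _ = sr * (((y/(16*sr)) * Real.sqrt (y/(16*sr)))/(20*A)) := by rw [hxxeq]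
          _ ≤ sr * (Lr*Real.sqrt Lr/(20*A)) := by
              apply mul_le_mul_of_nonneg_left _ hsrpos.le
              gcongr
      have hLhs : (1/(50000*A)) * ((n:ℝ)*Real.sqrt n) * u⁻¹
          = ((n:ℝ)*Real.sqrt n)/(50000*A*u) :=
        lhs_eq (ne_of_gt hupos) (ne_of_gt hApos)
      have hLbound : ((n:ℝ)*Real.sqrt n)/(50000*A*u) ≤ y*Real.sqrt y/(1280*A*w) :=
        cross_bound hApos hupos hwpos (by positivity) (by positivity) hyy hw32
      rw [hLhs]
      linarith
    rw [rpow_32 hn0r, rpow_neg_half hLL.le]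
    calc (1/(50000*A)) * ((n:ℝ)*Real.sqrt n) * (Real.sqrt (Real.log (Real.log n)))⁻¹
        ≤ sr * (Lr * Real.sqrt Lr / (20*A)) := hstep
      _ = (sW m : ℝ) * ((LW m:ℝ) * Real.sqrt (LW m) / (20*A)) := by rw [hsr, hLr]
      _ ≤ (selfIntZ X (2^m) ω : ℝ) := hsum1
      _ ≤ (selfIntZ X n ω : ℝ) := by exact_mod_cast selfIntZ_mono X ω h2m
  -- assemble the constant
  have hM12 : 12 ≤ M := le_max_right _ _
  have h3N : (3:ℕ) ≤ 2^M := by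
    calc (3:ℕ) ≤ 2^12 := by norm_num
      _ ≤ 2^M := Nat.pow_le_pow_right (by norm_num) hM12
  have hNne : (Finset.Icc 3 (2^M)).Nonempty := ⟨3, Finset.mem_Icc.2 ⟨le_refl 3, h3N⟩⟩
  set cfin : ℕ → ℝ := fun n =>
    Real.sqrt (Real.log (Real.log n)) / Real.sqrt n with hcfin
  refine ⟨min (1/(50000*A)) ((Finset.Icc 3 (2^M)).inf' hNne cfin), ?_, ?_⟩
  · apply lt_min
    · exact div_pos one_pos (by positivity)
    · rw [Finset.lt_inf'_iff]
      intro n hn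
      rw [Finset.mem_Icc] at hn
      have h1 := loglog_pos n hn.1
      have h2 : (0:ℝ) < n := by
        have : (0:ℕ) < n := by omega
        exact_mod_cast this
      apply div_pos (Real.sqrt_pos.2 h1) (Real.sqrt_pos.2 h2)
  · intro n hn3
    have hLL := loglog_pos n hn3
    have hn0 : (0:ℝ) < n := by
      have : (0:ℕ) < n := by omega
      exact_mod_cast this
    rcases le_or_gt n (2^M) with hsmall | hbig
    · -- small n : use the diagonal V_n ≥ n
      have hCle : min (1/(50000*A)) ((Finset.Icc 3 (2^M)).inf' hNne cfin) ≤ cfin n :=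
        le_trans (min_le_right _ _) (Finset.inf'_le _ (Finset.mem_Icc.2 ⟨hn3, hsmall⟩))
      rw [rpow_32 hn0, rpow_neg_half hLL.le]
      have hsn : (0:ℝ) < Real.sqrt n := Real.sqrt_pos.2 hn0
      have hsLL : (0:ℝ) < Real.sqrt (Real.log (Real.log n)) := Real.sqrt_pos.2 hLL
      calc min (1/(50000*A)) ((Finset.Icc 3 (2^M)).inf' hNne cfin)
            * ((n:ℝ) * Real.sqrt n) * (Real.sqrt (Real.log (Real.log n)))⁻¹
          ≤ cfin n * ((n:ℝ) * Real.sqrt n) * (Real.sqrt (Real.log (Real.log n)))⁻¹ := by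
            apply mul_le_mul_of_nonneg_right (mul_le_mul_of_nonneg_right hCle (by positivity))
              (by positivity)
        _ = (n:ℝ) * (Real.sqrt n / Real.sqrt n)
              * (Real.sqrt (Real.log (Real.log n)) / Real.sqrt (Real.log (Real.log n))) := by
            rw [hcfin]; field_simp
        _ = (n:ℝ) := by rw [div_self (ne_of_gt hsn), div_self (ne_of_gt hsLL)]; ring
        _ ≤ (selfIntZ X n ω : ℝ) := by exact_mod_cast le_selfIntZ X ω n
    · -- large n : dyadic scale
      set m := Nat.log 2 n with hmdef
      have hn0' : n ≠ 0 := by omega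
      have h2m : 2^m ≤ n := Nat.pow_log_le_self 2 hn0'
      have h2m' : n < 2^(m+1) := Nat.lt_pow_succ_log_self (by norm_num) n
      have hMm : M ≤ m := by
        have : 2^M ≤ n := le_of_lt hbig
        exact (Nat.le_log_iff_pow_le (by norm_num) hn0').2 this
      calc min (1/(50000*A)) ((Finset.Icc 3 (2^M)).inf' hNne cfin)
            * (n:ℝ) ^ ((3:ℝ)/2) * (Real.log (Real.log n)) ^ (-(1:ℝ)/2)
          ≤ (1/(50000*A)) * (n:ℝ) ^ ((3:ℝ)/2) * (Real.log (Real.log n)) ^ (-(1:ℝ)/2) := by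
            apply mul_le_mul_of_nonneg_right
              (mul_le_mul_of_nonneg_right (min_le_left _ _) (by positivity))
            positivity
        _ ≤ (selfIntZ X n ω : ℝ) := main m hMm n h2m h2m'
end
end
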